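/- arXiv:2003.10499 — 9 statements merged into one kernel-verified Lean document; each statement's English description precedes it below -/
import Mathlib

section
/- Every splitting ideal of T consists of splitting objects: if P ⊆ T is a splitting ideal and R ∈ P, then for every morphism f : X → Y in T the morphisms id_R ⊗ f and f ⊗ id_R are split. -/
open CategoryTheory CategoryTheory.Limits CategoryTheory.MonoidalCategory

universe v u w

/-- A morphism `f : X ⟶ Y` is *split* if it is a direct sum of a zero morphism and an
isomorphism; equivalently, if there exists `g : Y ⟶ X` with `f ≫ g ≫ f = f`. -/
def IsSplit {C : Type u} [Category.{v} C] {X Y : C} (f : X ⟶ Y) : Prop :=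
  ∃ g : Y ⟶ X, f ≫ g ≫ f = f

section Aux

open CategoryTheory.ExactPairing

variable {C : Type u} [Category.{v} C]

/-- A retract (in the arrow category) of a split morphism is split. -/
lemma isSplit_of_retract {A B A' B' : C} {u : A ⟶ B} {M : A' ⟶ B'}
    (iA : A ⟶ A') (iB : B ⟶ B') (pA : A' ⟶ A) (pB : B' ⟶ B)
    (hip : iA ≫ pA = 𝟙 A) (h1 : u ≫ iB = iA ≫ M) (h2 : M ≫ pB = pA ≫ u)
    (hM : IsSplit M) : IsSplit u := by
  obtain ⟨s, hs⟩ := hM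
  refine ⟨iB ≫ s ≫ pA, ?_⟩
  calc u ≫ (iB ≫ s ≫ pA) ≫ u = (u ≫ iB) ≫ s ≫ (pA ≫ u) := by
        simp only [Category.assoc]
    _ = (iA ≫ M) ≫ s ≫ (M ≫ pB) := by rw [h1, ← h2]
    _ = iA ≫ (M ≫ s ≫ M) ≫ pB := by simp only [Category.assoc]
    _ = iA ≫ M ≫ pB := by rw [hs]
    _ = iA ≫ pA ≫ u := by rw [h2]
    _ = u := by rw [← Category.assoc, hip, Category.id_comp]

variable [MonoidalCategory C]

/-- Half "bent" conjugation morphism used for transporting splitness through duality. -/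
noncomputable def Ψaux {P P' Q Q' : C} (c : 𝟙_ C ⟶ P ⊗ P') (e : Q' ⊗ Q ⟶ 𝟙_ C)
    (τ : P' ⟶ Q') : Q ⟶ P :=
  (λ_ Q).inv ≫ c ▷ Q ≫ (α_ P P' Q).hom ≫ P ◁ (τ ▷ Q) ≫ P ◁ e ≫ (ρ_ P).hom

lemma psi_comp_right {A B A' B' P P' : C} (u : A ⟶ B) (v : B' ⟶ A')
    (eA : A' ⊗ A ⟶ 𝟙_ C) (eB : B' ⊗ B ⟶ 𝟙_ C)
    (hstar : (B' ◁ u) ≫ eB = (v ▷ A) ≫ eA)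
    (c : 𝟙_ C ⟶ P ⊗ P') (τ : P' ⟶ B') :
    u ≫ Ψaux c eB τ = Ψaux c eA (τ ≫ v) := by
  dsimp only [Ψaux]
  calc u ≫ (λ_ B).inv ≫ c ▷ B ≫ (α_ P P' B).hom ≫ P ◁ (τ ▷ B) ≫ P ◁ eB ≫ (ρ_ P).hom
      = (λ_ A).inv ≫ (𝟙_ C ◁ u) ≫ c ▷ B ≫ (α_ P P' B).hom ≫ P ◁ (τ ▷ B) ≫ P ◁ eB
          ≫ (ρ_ P).hom := by
        rw [leftUnitor_inv_naturality_assoc]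
    _ = (λ_ A).inv ≫ c ▷ A ≫ ((P ⊗ P') ◁ u) ≫ (α_ P P' B).hom ≫ P ◁ (τ ▷ B) ≫ P ◁ eB
          ≫ (ρ_ P).hom := by
        rw [whisker_exchange_assoc]
    _ = (λ_ A).inv ≫ c ▷ A ≫ (α_ P P' A).hom ≫ P ◁ (P' ◁ u) ≫ P ◁ (τ ▷ B) ≫ P ◁ eB
          ≫ (ρ_ P).hom := by
        rw [associator_naturality_right_assoc]
    _ = (λ_ A).inv ≫ c ▷ A ≫ (α_ P P' A).hom ≫ P ◁ ((P' ◁ u) ≫ (τ ▷ B) ≫ eB)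
          ≫ (ρ_ P).hom := by
        simp only [MonoidalCategory.whiskerLeft_comp, Category.assoc]
    _ = (λ_ A).inv ≫ c ▷ A ≫ (α_ P P' A).hom ≫ P ◁ ((τ ▷ A) ≫ (B' ◁ u) ≫ eB)
          ≫ (ρ_ P).hom := by
        rw [whisker_exchange_assoc]
    _ = (λ_ A).inv ≫ c ▷ A ≫ (α_ P P' A).hom ≫ P ◁ ((τ ▷ A) ≫ (v ▷ A) ≫ eA)
          ≫ (ρ_ P).hom := by
        rw [hstar]
    _ = (λ_ A).inv ≫ c ▷ A ≫ (α_ P P' A).hom ≫ P ◁ ((τ ≫ v) ▷ A) ≫ P ◁ eA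
          ≫ (ρ_ P).hom := by
        simp only [comp_whiskerRight, MonoidalCategory.whiskerLeft_comp, Category.assoc]

lemma psi_comp_left {A B A' B' Q Q' : C} (u : A ⟶ B) (v : B' ⟶ A')
    (cA : 𝟙_ C ⟶ A ⊗ A') (cB : 𝟙_ C ⟶ B ⊗ B')
    (hstar : cA ≫ (u ▷ A') = cB ≫ (B ◁ v))
    (e : Q' ⊗ Q ⟶ 𝟙_ C) (τ : A' ⟶ Q') :
    Ψaux cA e τ ≫ u = Ψaux cB e (v ≫ τ) := by
  dsimp only [Ψaux]
  simp only [Category.assoc]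
  calc (λ_ Q).inv ≫ cA ▷ Q ≫ (α_ A A' Q).hom ≫ A ◁ (τ ▷ Q) ≫ A ◁ e ≫ (ρ_ A).hom ≫ u
      = (λ_ Q).inv ≫ cA ▷ Q ≫ (α_ A A' Q).hom ≫ A ◁ (τ ▷ Q) ≫ A ◁ e ≫ (u ▷ 𝟙_ C)
          ≫ (ρ_ B).hom := by
        rw [rightUnitor_naturality]
    _ = (λ_ Q).inv ≫ cA ▷ Q ≫ (α_ A A' Q).hom ≫ A ◁ (τ ▷ Q) ≫ (u ▷ (Q' ⊗ Q)) ≫ B ◁ e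
          ≫ (ρ_ B).hom := by
        rw [whisker_exchange_assoc]
    _ = (λ_ Q).inv ≫ cA ▷ Q ≫ (α_ A A' Q).hom ≫ (u ▷ (A' ⊗ Q)) ≫ B ◁ (τ ▷ Q) ≫ B ◁ e
          ≫ (ρ_ B).hom := by
        rw [whisker_exchange_assoc]
    _ = (λ_ Q).inv ≫ cA ▷ Q ≫ ((u ▷ A') ▷ Q) ≫ (α_ B A' Q).hom ≫ B ◁ (τ ▷ Q) ≫ B ◁ e
          ≫ (ρ_ B).hom := by
        rw [associator_naturality_left_assoc]
    _ = (λ_ Q).inv ≫ ((cA ≫ u ▷ A') ▷ Q) ≫ (α_ B A' Q).hom ≫ B ◁ (τ ▷ Q) ≫ B ◁ e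
          ≫ (ρ_ B).hom := by
        simp only [comp_whiskerRight, Category.assoc]
    _ = (λ_ Q).inv ≫ ((cB ≫ B ◁ v) ▷ Q) ≫ (α_ B A' Q).hom ≫ B ◁ (τ ▷ Q) ≫ B ◁ e
          ≫ (ρ_ B).hom := by
        rw [hstar]
    _ = (λ_ Q).inv ≫ cB ▷ Q ≫ ((B ◁ v) ▷ Q) ≫ (α_ B A' Q).hom ≫ B ◁ (τ ▷ Q) ≫ B ◁ e
          ≫ (ρ_ B).hom := by
        simp only [comp_whiskerRight, Category.assoc]
    _ = (λ_ Q).inv ≫ cB ▷ Q ≫ (α_ B B' Q).hom ≫ B ◁ (v ▷ Q) ≫ B ◁ (τ ▷ Q) ≫ B ◁ e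
          ≫ (ρ_ B).hom := by
        rw [associator_naturality_middle_assoc]
    _ = (λ_ Q).inv ≫ cB ▷ Q ≫ (α_ B B' Q).hom ≫ B ◁ ((v ≫ τ) ▷ Q) ≫ B ◁ e
          ≫ (ρ_ B).hom := by
        simp only [comp_whiskerRight, MonoidalCategory.whiskerLeft_comp, Category.assoc]

lemma psi_v {A B A' B' : C} (u : A ⟶ B) (v : B' ⟶ A')
    (cB : 𝟙_ C ⟶ B ⊗ B') (eA : A' ⊗ A ⟶ 𝟙_ C) (eB : B' ⊗ B ⟶ 𝟙_ C)
    (hstar : (B' ◁ u) ≫ eB = (v ▷ A) ≫ eA)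
    (hzig : cB ▷ B ≫ (α_ B B' B).hom ≫ B ◁ eB = (λ_ B).hom ≫ (ρ_ B).inv) :
    Ψaux cB eA v = u := by
  dsimp only [Ψaux]
  calc (λ_ A).inv ≫ cB ▷ A ≫ (α_ B B' A).hom ≫ B ◁ (v ▷ A) ≫ B ◁ eA ≫ (ρ_ B).hom
      = (λ_ A).inv ≫ cB ▷ A ≫ (α_ B B' A).hom ≫ B ◁ ((v ▷ A) ≫ eA) ≫ (ρ_ B).hom := by
        simp only [MonoidalCategory.whiskerLeft_comp, Category.assoc]
    _ = (λ_ A).inv ≫ cB ▷ A ≫ (α_ B B' A).hom ≫ B ◁ ((B' ◁ u) ≫ eB) ≫ (ρ_ B).hom := by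
        rw [hstar]
    _ = (λ_ A).inv ≫ cB ▷ A ≫ (α_ B B' A).hom ≫ B ◁ (B' ◁ u) ≫ B ◁ eB ≫ (ρ_ B).hom := by
        simp only [MonoidalCategory.whiskerLeft_comp, Category.assoc]
    _ = (λ_ A).inv ≫ cB ▷ A ≫ ((B ⊗ B') ◁ u) ≫ (α_ B B' B).hom ≫ B ◁ eB ≫ (ρ_ B).hom := by
        rw [associator_naturality_right_assoc]
    _ = (λ_ A).inv ≫ (𝟙_ C ◁ u) ≫ cB ▷ B ≫ (α_ B B' B).hom ≫ B ◁ eB ≫ (ρ_ B).hom := by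
        rw [whisker_exchange_assoc]
    _ = u ≫ (λ_ B).inv ≫ cB ▷ B ≫ (α_ B B' B).hom ≫ B ◁ eB ≫ (ρ_ B).hom := by
        rw [leftUnitor_inv_naturality_assoc]
    _ = u ≫ (λ_ B).inv ≫ (λ_ B).hom ≫ (ρ_ B).inv ≫ (ρ_ B).hom := by
        rw [reassoc_of% hzig]
    _ = u := by simp

/-- Contravariant transport of splitness through a "mate". -/
lemma isSplit_of_mate {A B A' B' : C} (u : A ⟶ B) (v : B' ⟶ A')
    (cA : 𝟙_ C ⟶ A ⊗ A') (cB : 𝟙_ C ⟶ B ⊗ B')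
    (eA : A' ⊗ A ⟶ 𝟙_ C) (eB : B' ⊗ B ⟶ 𝟙_ C)
    (h1 : (B' ◁ u) ≫ eB = (v ▷ A) ≫ eA)
    (h2 : cA ≫ (u ▷ A') = cB ≫ (B ◁ v))
    (hzig : cB ▷ B ≫ (α_ B B' B).hom ≫ B ◁ eB = (λ_ B).hom ≫ (ρ_ B).inv)
    (hv : IsSplit v) : IsSplit u := by
  obtain ⟨σ, hσ⟩ := hv
  refine ⟨Ψaux cA eB σ, ?_⟩
  calc u ≫ Ψaux cA eB σ ≫ u = (u ≫ Ψaux cA eB σ) ≫ u := by rw [Category.assoc]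
    _ = Ψaux cA eA (σ ≫ v) ≫ u := by rw [psi_comp_right u v eA eB h1 cA σ]
    _ = Ψaux cB eA (v ≫ σ ≫ v) := psi_comp_left u v cA cB h2 eA (σ ≫ v)
    _ = Ψaux cB eA v := by rw [hσ]
    _ = u := psi_v u v cB eA eB h1 hzig

end Aux

section Rigid

open CategoryTheory.ExactPairing

variable {C : Type u} [Category.{v} C] [MonoidalCategory C]

/-- Insertion of a coevaluation on the left. -/
noncomputable def iAux (R : C) [HasRightDual R] (Z : C) : Z ⟶ R ⊗ ((Rᘁ) ⊗ Z) :=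
  (λ_ Z).inv ≫ η_ R (Rᘁ) ▷ Z ≫ (α_ R (Rᘁ) Z).hom

/-- Cancellation of an evaluation on the left. -/
noncomputable def qAux (R : C) [HasRightDual R] (W : C) : (Rᘁ) ⊗ (R ⊗ W) ⟶ W :=
  (α_ (Rᘁ) R W).inv ≫ ε_ R (Rᘁ) ▷ W ≫ (λ_ W).hom

lemma iAux_natural (R : C) [HasRightDual R] {Z Z' : C} (u : Z ⟶ Z') :
    u ≫ iAux R Z' = iAux R Z ≫ R ◁ ((Rᘁ) ◁ u) := by
  dsimp only [iAux]
  simp only [Category.assoc]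
  calc u ≫ (λ_ Z').inv ≫ η_ R (Rᘁ) ▷ Z' ≫ (α_ R (Rᘁ) Z').hom
      = (λ_ Z).inv ≫ 𝟙_ C ◁ u ≫ η_ R (Rᘁ) ▷ Z' ≫ (α_ R (Rᘁ) Z').hom := by
        rw [leftUnitor_inv_naturality_assoc]
    _ = (λ_ Z).inv ≫ η_ R (Rᘁ) ▷ Z ≫ (R ⊗ (Rᘁ)) ◁ u ≫ (α_ R (Rᘁ) Z').hom := by
        rw [whisker_exchange_assoc]
    _ = (λ_ Z).inv ≫ η_ R (Rᘁ) ▷ Z ≫ (α_ R (Rᘁ) Z).hom ≫ R ◁ ((Rᘁ) ◁ u) := by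
        rw [associator_naturality_right]

lemma qAux_natural (R : C) [HasRightDual R] {W W' : C} (w : W ⟶ W') :
    (Rᘁ) ◁ (R ◁ w) ≫ qAux R W' = qAux R W ≫ w := by
  dsimp only [qAux]
  simp only [Category.assoc]
  calc (Rᘁ) ◁ (R ◁ w) ≫ (α_ (Rᘁ) R W').inv ≫ ε_ R (Rᘁ) ▷ W' ≫ (λ_ W').hom
      = (α_ (Rᘁ) R W).inv ≫ ((Rᘁ) ⊗ R) ◁ w ≫ ε_ R (Rᘁ) ▷ W' ≫ (λ_ W').hom := by
        rw [associator_inv_naturality_right_assoc]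
    _ = (α_ (Rᘁ) R W).inv ≫ ε_ R (Rᘁ) ▷ W ≫ 𝟙_ C ◁ w ≫ (λ_ W').hom := by
        rw [whisker_exchange_assoc]
    _ = (α_ (Rᘁ) R W).inv ≫ ε_ R (Rᘁ) ▷ W ≫ (λ_ W).hom ≫ w := by
        rw [leftUnitor_naturality]

lemma iAux_qAux (R : C) [HasRightDual R] (W : C) :
    iAux R (R ⊗ W) ≫ R ◁ qAux R W = 𝟙 (R ⊗ W) := by
  dsimp only [iAux, qAux]
  simp only [Category.assoc]
  calc (λ_ (R ⊗ W)).inv ≫ η_ R (Rᘁ) ▷ (R ⊗ W) ≫ (α_ R (Rᘁ) (R ⊗ W)).hom ≫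
        R ◁ ((α_ (Rᘁ) R W).inv ≫ ε_ R (Rᘁ) ▷ W ≫ (λ_ W).hom)
      = 𝟙 (R ⊗ W) ⊗≫ (η_ R (Rᘁ) ▷ R ⊗≫ R ◁ ε_ R (Rᘁ)) ▷ W ⊗≫ 𝟙 (R ⊗ W) := by
        monoidal
    _ = 𝟙 (R ⊗ W) := by rw [evaluation_coevaluation'']; monoidal

/-- The first half: `R ◁ f` is split whenever `R` belongs to a splitting ideal. -/
lemma splitL [RigidCategory C] (P : Set C)
    (hPl : ∀ (X : C) {R : C}, R ∈ P → X ⊗ R ∈ P)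
    (hPr : ∀ (X : C) {R : C}, R ∈ P → R ⊗ X ∈ P)
    (hPsplit : ∀ {Q₁ Q₂ R : C}, Q₁ ∈ P → Q₂ ∈ P → R ∈ P →
      ∀ f : Q₁ ⟶ Q₂, IsSplit (R ◁ f))
    {R : C} (hR : R ∈ P) {X Y : C} (f : X ⟶ Y) : IsSplit (R ◁ f) := by
  have hM : IsSplit (R ◁ ((Rᘁ) ◁ (R ◁ f))) :=
    hPsplit (hPl (Rᘁ) (hPr X hR)) (hPl (Rᘁ) (hPr Y hR)) hR ((Rᘁ) ◁ (R ◁ f))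
  refine isSplit_of_retract (iAux R (R ⊗ X)) (iAux R (R ⊗ Y)) (R ◁ qAux R X) (R ◁ qAux R Y)
    (iAux_qAux R X) (iAux_natural R (R ◁ f)) ?_ hM
  calc R ◁ ((Rᘁ) ◁ (R ◁ f)) ≫ R ◁ qAux R Y
      = R ◁ ((Rᘁ) ◁ (R ◁ f) ≫ qAux R Y) := by rw [← MonoidalCategory.whiskerLeft_comp]
    _ = R ◁ (qAux R X ≫ f) := by rw [qAux_natural]
    _ = R ◁ qAux R X ≫ R ◁ f := by rw [MonoidalCategory.whiskerLeft_comp]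

/-- Coevaluation for the composite pairing of `Z ⊗ R` with `Rᘁ ⊗ Zᘁ`. -/
noncomputable def cMate (R Z : C) [HasRightDual R] [HasRightDual Z] :
    𝟙_ C ⟶ (Z ⊗ R) ⊗ ((Rᘁ) ⊗ (Zᘁ)) :=
  η_ Z (Zᘁ) ≫ (Z ◁ ((λ_ (Zᘁ)).inv ≫ η_ R (Rᘁ) ▷ (Zᘁ) ≫ (α_ R (Rᘁ) (Zᘁ)).hom)) ≫
    (α_ Z R ((Rᘁ) ⊗ (Zᘁ))).inv

/-- Evaluation for the composite pairing of `Z ⊗ R` with `Rᘁ ⊗ Zᘁ`. -/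
noncomputable def eMate (R Z : C) [HasRightDual R] [HasRightDual Z] :
    ((Rᘁ) ⊗ (Zᘁ)) ⊗ (Z ⊗ R) ⟶ 𝟙_ C :=
  (α_ (Rᘁ) (Zᘁ) (Z ⊗ R)).hom ≫
    ((Rᘁ) ◁ ((α_ (Zᘁ) Z R).inv ≫ (ε_ Z (Zᘁ) ▷ R) ≫ (λ_ R).hom)) ≫ ε_ R (Rᘁ)

lemma star1 (R : C) [HasRightDual R] {X Y : C} [HasRightDual X] [HasRightDual Y] (f : X ⟶ Y) :
    (((Rᘁ) ⊗ (Yᘁ)) ◁ (f ▷ R)) ≫ eMate R Y = (((Rᘁ) ◁ (fᘁ)) ▷ (X ⊗ R)) ≫ eMate R X := by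
  dsimp only [eMate]
  have inner : (Yᘁ) ◁ (f ▷ R) ≫ (α_ (Yᘁ) Y R).inv ≫ (ε_ Y (Yᘁ) ▷ R) ≫ (λ_ R).hom
      = (fᘁ) ▷ (X ⊗ R) ≫ (α_ (Xᘁ) X R).inv ≫ (ε_ X (Xᘁ) ▷ R) ≫ (λ_ R).hom := by
    calc (Yᘁ) ◁ (f ▷ R) ≫ (α_ (Yᘁ) Y R).inv ≫ (ε_ Y (Yᘁ) ▷ R) ≫ (λ_ R).hom
        = (α_ (Yᘁ) X R).inv ≫ (((Yᘁ) ◁ f) ▷ R) ≫ (ε_ Y (Yᘁ) ▷ R) ≫ (λ_ R).hom := by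
          rw [associator_inv_naturality_middle_assoc]
      _ = (α_ (Yᘁ) X R).inv ≫ ((((Yᘁ) ◁ f) ≫ ε_ Y (Yᘁ)) ▷ R) ≫ (λ_ R).hom := by
          rw [comp_whiskerRight, Category.assoc]
      _ = (α_ (Yᘁ) X R).inv ≫ ((((fᘁ) ▷ X) ≫ ε_ X (Xᘁ)) ▷ R) ≫ (λ_ R).hom := by
          rw [rightAdjointMate_comp_evaluation]
      _ = (α_ (Yᘁ) X R).inv ≫ (((fᘁ) ▷ X) ▷ R) ≫ (ε_ X (Xᘁ) ▷ R) ≫ (λ_ R).hom := by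
          rw [comp_whiskerRight, Category.assoc]
      _ = (fᘁ) ▷ (X ⊗ R) ≫ (α_ (Xᘁ) X R).inv ≫ (ε_ X (Xᘁ) ▷ R) ≫ (λ_ R).hom := by
          rw [associator_inv_naturality_left_assoc]
  calc (((Rᘁ) ⊗ (Yᘁ)) ◁ (f ▷ R)) ≫ (α_ (Rᘁ) (Yᘁ) (Y ⊗ R)).hom ≫
        ((Rᘁ) ◁ ((α_ (Yᘁ) Y R).inv ≫ (ε_ Y (Yᘁ) ▷ R) ≫ (λ_ R).hom)) ≫ ε_ R (Rᘁ)
      = (α_ (Rᘁ) (Yᘁ) (X ⊗ R)).hom ≫ ((Rᘁ) ◁ ((Yᘁ) ◁ (f ▷ R))) ≫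
        ((Rᘁ) ◁ ((α_ (Yᘁ) Y R).inv ≫ (ε_ Y (Yᘁ) ▷ R) ≫ (λ_ R).hom)) ≫ ε_ R (Rᘁ) := by
        rw [associator_naturality_right_assoc]
    _ = (α_ (Rᘁ) (Yᘁ) (X ⊗ R)).hom ≫
        ((Rᘁ) ◁ ((Yᘁ) ◁ (f ▷ R) ≫ (α_ (Yᘁ) Y R).inv ≫ (ε_ Y (Yᘁ) ▷ R) ≫ (λ_ R).hom)) ≫
        ε_ R (Rᘁ) := by
        simp only [MonoidalCategory.whiskerLeft_comp, Category.assoc]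
    _ = (α_ (Rᘁ) (Yᘁ) (X ⊗ R)).hom ≫
        ((Rᘁ) ◁ ((fᘁ) ▷ (X ⊗ R) ≫ (α_ (Xᘁ) X R).inv ≫ (ε_ X (Xᘁ) ▷ R) ≫ (λ_ R).hom)) ≫
        ε_ R (Rᘁ) := by
        rw [inner]
    _ = (α_ (Rᘁ) (Yᘁ) (X ⊗ R)).hom ≫ ((Rᘁ) ◁ ((fᘁ) ▷ (X ⊗ R))) ≫
        ((Rᘁ) ◁ ((α_ (Xᘁ) X R).inv ≫ (ε_ X (Xᘁ) ▷ R) ≫ (λ_ R).hom)) ≫ ε_ R (Rᘁ) := by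
        simp only [MonoidalCategory.whiskerLeft_comp, Category.assoc]
    _ = (((Rᘁ) ◁ (fᘁ)) ▷ (X ⊗ R)) ≫ (α_ (Rᘁ) (Xᘁ) (X ⊗ R)).hom ≫
        ((Rᘁ) ◁ ((α_ (Xᘁ) X R).inv ≫ (ε_ X (Xᘁ) ▷ R) ≫ (λ_ R).hom)) ≫ ε_ R (Rᘁ) := by
        rw [associator_naturality_middle_assoc]

lemma star2 (R : C) [HasRightDual R] {X Y : C} [HasRightDual X] [HasRightDual Y] (f : X ⟶ Y) :
    cMate R X ≫ ((f ▷ R) ▷ ((Rᘁ) ⊗ (Xᘁ))) = cMate R Y ≫ ((Y ⊗ R) ◁ ((Rᘁ) ◁ (fᘁ))) := by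
  dsimp only [cMate]
  have inner : (fᘁ) ≫ ((λ_ (Xᘁ)).inv ≫ η_ R (Rᘁ) ▷ (Xᘁ) ≫ (α_ R (Rᘁ) (Xᘁ)).hom)
      = ((λ_ (Yᘁ)).inv ≫ η_ R (Rᘁ) ▷ (Yᘁ) ≫ (α_ R (Rᘁ) (Yᘁ)).hom) ≫ R ◁ ((Rᘁ) ◁ (fᘁ)) := by
    calc (fᘁ) ≫ (λ_ (Xᘁ)).inv ≫ η_ R (Rᘁ) ▷ (Xᘁ) ≫ (α_ R (Rᘁ) (Xᘁ)).hom
        = (λ_ (Yᘁ)).inv ≫ 𝟙_ C ◁ (fᘁ) ≫ η_ R (Rᘁ) ▷ (Xᘁ) ≫ (α_ R (Rᘁ) (Xᘁ)).hom := by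
          rw [leftUnitor_inv_naturality_assoc]
      _ = (λ_ (Yᘁ)).inv ≫ η_ R (Rᘁ) ▷ (Yᘁ) ≫ (R ⊗ (Rᘁ)) ◁ (fᘁ) ≫ (α_ R (Rᘁ) (Xᘁ)).hom := by
          rw [whisker_exchange_assoc]
      _ = (λ_ (Yᘁ)).inv ≫ η_ R (Rᘁ) ▷ (Yᘁ) ≫ (α_ R (Rᘁ) (Yᘁ)).hom ≫ R ◁ ((Rᘁ) ◁ (fᘁ)) := by
          rw [associator_naturality_right]
      _ = ((λ_ (Yᘁ)).inv ≫ η_ R (Rᘁ) ▷ (Yᘁ) ≫ (α_ R (Rᘁ) (Yᘁ)).hom) ≫ R ◁ ((Rᘁ) ◁ (fᘁ)) := by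
          simp only [Category.assoc]
  calc (η_ X (Xᘁ) ≫ (X ◁ ((λ_ (Xᘁ)).inv ≫ η_ R (Rᘁ) ▷ (Xᘁ) ≫ (α_ R (Rᘁ) (Xᘁ)).hom)) ≫
        (α_ X R ((Rᘁ) ⊗ (Xᘁ))).inv) ≫ ((f ▷ R) ▷ ((Rᘁ) ⊗ (Xᘁ)))
      = η_ X (Xᘁ) ≫ (X ◁ ((λ_ (Xᘁ)).inv ≫ η_ R (Rᘁ) ▷ (Xᘁ) ≫ (α_ R (Rᘁ) (Xᘁ)).hom)) ≫
        (f ▷ (R ⊗ ((Rᘁ) ⊗ (Xᘁ)))) ≫ (α_ Y R ((Rᘁ) ⊗ (Xᘁ))).inv := by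
        simp only [Category.assoc]
        rw [associator_inv_naturality_left]
    _ = η_ X (Xᘁ) ≫ (f ▷ (Xᘁ)) ≫
        (Y ◁ ((λ_ (Xᘁ)).inv ≫ η_ R (Rᘁ) ▷ (Xᘁ) ≫ (α_ R (Rᘁ) (Xᘁ)).hom)) ≫
        (α_ Y R ((Rᘁ) ⊗ (Xᘁ))).inv := by
        rw [← whisker_exchange_assoc]
    _ = η_ Y (Yᘁ) ≫ (Y ◁ (fᘁ)) ≫
        (Y ◁ ((λ_ (Xᘁ)).inv ≫ η_ R (Rᘁ) ▷ (Xᘁ) ≫ (α_ R (Rᘁ) (Xᘁ)).hom)) ≫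
        (α_ Y R ((Rᘁ) ⊗ (Xᘁ))).inv := by
        rw [← coevaluation_comp_rightAdjointMate_assoc]
    _ = η_ Y (Yᘁ) ≫
        (Y ◁ ((fᘁ) ≫ (λ_ (Xᘁ)).inv ≫ η_ R (Rᘁ) ▷ (Xᘁ) ≫ (α_ R (Rᘁ) (Xᘁ)).hom)) ≫
        (α_ Y R ((Rᘁ) ⊗ (Xᘁ))).inv := by
        simp only [MonoidalCategory.whiskerLeft_comp, Category.assoc]
    _ = η_ Y (Yᘁ) ≫
        (Y ◁ (((λ_ (Yᘁ)).inv ≫ η_ R (Rᘁ) ▷ (Yᘁ) ≫ (α_ R (Rᘁ) (Yᘁ)).hom) ≫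
          R ◁ ((Rᘁ) ◁ (fᘁ)))) ≫ (α_ Y R ((Rᘁ) ⊗ (Xᘁ))).inv := by
        rw [inner]
    _ = η_ Y (Yᘁ) ≫
        (Y ◁ ((λ_ (Yᘁ)).inv ≫ η_ R (Rᘁ) ▷ (Yᘁ) ≫ (α_ R (Rᘁ) (Yᘁ)).hom)) ≫
        (Y ◁ (R ◁ ((Rᘁ) ◁ (fᘁ)))) ≫ (α_ Y R ((Rᘁ) ⊗ (Xᘁ))).inv := by
        simp only [MonoidalCategory.whiskerLeft_comp, Category.assoc]
    _ = (η_ Y (Yᘁ) ≫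
        (Y ◁ ((λ_ (Yᘁ)).inv ≫ η_ R (Rᘁ) ▷ (Yᘁ) ≫ (α_ R (Rᘁ) (Yᘁ)).hom)) ≫
        (α_ Y R ((Rᘁ) ⊗ (Yᘁ))).inv) ≫ ((Y ⊗ R) ◁ ((Rᘁ) ◁ (fᘁ))) := by
        simp only [Category.assoc]
        rw [associator_inv_naturality_right]

lemma zigMate (R Z : C) [HasRightDual R] [HasRightDual Z] :
    (cMate R Z) ▷ (Z ⊗ R) ≫ (α_ (Z ⊗ R) ((Rᘁ) ⊗ (Zᘁ)) (Z ⊗ R)).hom ≫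
      (Z ⊗ R) ◁ (eMate R Z) = (λ_ (Z ⊗ R)).hom ≫ (ρ_ (Z ⊗ R)).inv := by
  dsimp only [cMate, eMate]
  calc ((η_ Z (Zᘁ) ≫ (Z ◁ ((λ_ (Zᘁ)).inv ≫ η_ R (Rᘁ) ▷ (Zᘁ) ≫ (α_ R (Rᘁ) (Zᘁ)).hom)) ≫
        (α_ Z R ((Rᘁ) ⊗ (Zᘁ))).inv) ▷ (Z ⊗ R)) ≫
        (α_ (Z ⊗ R) ((Rᘁ) ⊗ (Zᘁ)) (Z ⊗ R)).hom ≫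
        ((Z ⊗ R) ◁ ((α_ (Rᘁ) (Zᘁ) (Z ⊗ R)).hom ≫
          ((Rᘁ) ◁ ((α_ (Zᘁ) Z R).inv ≫ (ε_ Z (Zᘁ) ▷ R) ≫ (λ_ R).hom)) ≫ ε_ R (Rᘁ)))
      = 𝟙 _ ⊗≫ (η_ Z (Zᘁ)) ▷ (Z ⊗ R) ⊗≫
          Z ◁ ((η_ R (Rᘁ)) ▷ ((Zᘁ) ⊗ (Z ⊗ R)) ≫
            (R ⊗ (Rᘁ)) ◁ ((α_ (Zᘁ) Z R).inv ≫ (ε_ Z (Zᘁ) ▷ R) ≫ (λ_ R).hom)) ⊗≫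
          Z ◁ (R ◁ ε_ R (Rᘁ)) ⊗≫ 𝟙 _ := by
        monoidal
    _ = 𝟙 _ ⊗≫ (η_ Z (Zᘁ)) ▷ (Z ⊗ R) ⊗≫
          Z ◁ (𝟙_ C ◁ ((α_ (Zᘁ) Z R).inv ≫ (ε_ Z (Zᘁ) ▷ R) ≫ (λ_ R).hom) ≫
            (η_ R (Rᘁ)) ▷ R) ⊗≫
          Z ◁ (R ◁ ε_ R (Rᘁ)) ⊗≫ 𝟙 _ := by
        rw [← whisker_exchange]
    _ = 𝟙 _ ⊗≫ ((η_ Z (Zᘁ)) ▷ Z ⊗≫ Z ◁ ε_ Z (Zᘁ)) ▷ R ⊗≫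
          Z ◁ ((η_ R (Rᘁ)) ▷ R ⊗≫ R ◁ ε_ R (Rᘁ)) ⊗≫ 𝟙 _ := by
        monoidal
    _ = (λ_ (Z ⊗ R)).hom ≫ (ρ_ (Z ⊗ R)).inv := by
        rw [evaluation_coevaluation'', evaluation_coevaluation'']
        monoidal

end Rigid

/-- Every splitting ideal of `T` consists of splitting objects: if `P ⊆ T` is a splitting ideal
and `R ∈ P`, then for every morphism `f : X ⟶ Y` in `T` the morphisms `id_R ⊗ f` and
`f ⊗ id_R` are split. -/
theorem splittingIdeal_consists_of_splittingObjects
    {k : Type w} [Field k] [IsAlgClosed k]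
    {C : Type u} [Category.{v} C] [Preadditive C] [Linear k C]
    [MonoidalCategory C] [MonoidalPreadditive C] [MonoidalLinear k C]
    [RigidCategory C] [IsIdempotentComplete C]
    [HasFiniteBiproducts C] [HasBinaryBiproducts C]
    [∀ X Y : C, FiniteDimensional k (X ⟶ Y)]
    (P : Set C)
    -- `P` is a thick ideal:
    (hPl : ∀ (X : C) {R : C}, R ∈ P → X ⊗ R ∈ P)
    (hPr : ∀ (X : C) {R : C}, R ∈ P → R ⊗ X ∈ P)
    (hPsum : ∀ {R S : C}, R ∈ P → S ∈ P → (R ⊞ S) ∈ P)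
    (hPsummand : ∀ {R S : C} (i : R ⟶ S) (r : S ⟶ R), i ≫ r = 𝟙 R → S ∈ P → R ∈ P)
    -- `P` is a splitting ideal:
    (hPsplit : ∀ {Q₁ Q₂ R : C}, Q₁ ∈ P → Q₂ ∈ P → R ∈ P →
      ∀ f : Q₁ ⟶ Q₂, IsSplit (R ◁ f))
    {R : C} (hR : R ∈ P) {X Y : C} (f : X ⟶ Y) :
    IsSplit (R ◁ f) ∧ IsSplit (f ▷ R) := by
  refine ⟨splitL P hPl hPr hPsplit hR f, ?_⟩
  -- the right dual of `R` also belongs to `P`: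
  have hRd : (Rᘁ : C) ∈ P := by
    refine hPsummand ((ρ_ (Rᘁ)).inv ≫ (Rᘁ) ◁ η_ R (Rᘁ))
      ((α_ (Rᘁ) R (Rᘁ)).inv ≫ ε_ R (Rᘁ) ▷ (Rᘁ) ≫ (λ_ (Rᘁ)).hom) ?_
      (hPl (Rᘁ) (hPr (Rᘁ) hR))
    simp
  have hv : IsSplit ((Rᘁ) ◁ (fᘁ)) := splitL P hPl hPr hPsplit hRd (fᘁ)
  exact isSplit_of_mate (f ▷ R) ((Rᘁ) ◁ (fᘁ)) (cMate R X) (cMate R Y) (eMate R X) (eMate R Y)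
    (star1 R f) (star2 R f) (zigMate R Y) hv
end

section
/- Let R ∈ T be an indecomposable splitting object and Q ∈ T any object. The following conditions are equivalent: (i) there exists X ∈ T with Hom(X ⊗ Q, R) ≠ 0; (ii) there exists X ∈ T with Hom(R, X ⊗ Q) ≠ 0; (iii) there exists X ∈ T such that R is a direct summand of X ⊗ Q. -/
open CategoryTheory CategoryTheory.Limits CategoryTheory.MonoidalCategory

universe v u w

/-- An object `R` is a *splitting object* if for every morphism `f : X ⟶ Y` both
`id_R ⊗ f` and `f ⊗ id_R` are split. -/
def IsSplittingObject {C : Type u} [Category.{v} C] [MonoidalCategory C] (R : C) : Prop :=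
  ∀ ⦃X Y : C⦄ (f : X ⟶ Y), IsSplit (R ◁ f) ∧ IsSplit (f ▷ R)

/-- An object `R` is *indecomposable* if it is nonzero and its only idempotent endomorphisms
are `0` and the identity. -/
def IsIndecomposable {C : Type u} [Category.{v} C] [Preadditive C] (R : C) : Prop :=
  ¬ IsZero R ∧ ∀ e : R ⟶ R, e ≫ e = e → e = 0 ∨ e = 𝟙 R

/-- `R` is a direct summand of `S`. -/
def IsDirectSummand {C : Type u} [Category.{v} C] (R S : C) : Prop :=
  ∃ (i : R ⟶ S) (r : S ⟶ R), i ≫ r = 𝟙 R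

/-- Splitness is stable under pre- and post-composition with isomorphisms. -/
lemma IsSplit.iso_comp_iso {C : Type u} [Category.{v} C] {X X' Y Y' : C} {f : X ⟶ Y}
    (hf : IsSplit f) (i : X' ≅ X) (j : Y ≅ Y') : IsSplit (i.hom ≫ f ≫ j.hom) := by
  obtain ⟨g, hg⟩ := hf
  exact ⟨j.inv ≫ g ≫ i.inv, by simp [reassoc_of% hg]⟩

/-- A morphism equal to a split morphism conjugated by isomorphisms is split. -/
lemma IsSplit.of_eq {C : Type u} [Category.{v} C] {X X' Y Y' : C} {f : X ⟶ Y}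
    (hf : IsSplit f) (i : X' ≅ X) (j : Y ≅ Y') {h : X' ⟶ Y'}
    (hh : h = i.hom ≫ f ≫ j.hom) : IsSplit h :=
  hh ▸ hf.iso_comp_iso i j

section

variable {k : Type w} [Field k] [IsAlgClosed k]
variable {C : Type u} [Category.{v} C] [Preadditive C] [Linear k C]
  [MonoidalCategory C] [MonoidalPreadditive C] [MonoidalLinear k C]
  [RigidCategory C] [IsIdempotentComplete C]
  [HasFiniteBiproducts C] [HasBinaryBiproducts C]
  [∀ X Y : C, FiniteDimensional k (X ⟶ Y)]

set_option linter.unusedSectionVars false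

/-- A nonzero split morphism into an indecomposable object exhibits it as a direct summand
of the source. -/
lemma isDirectSummand_of_split_to {R A : C} (hRind : IsIndecomposable R)
    {h : A ⟶ R} (hne : h ≠ 0) (hsp : IsSplit h) : IsDirectSummand R A := by
  obtain ⟨g, hg⟩ := hsp
  rcases hRind.2 (g ≫ h) (by rw [Category.assoc, hg]) with h0 | h1
  · rw [h0, Limits.comp_zero] at hg
    exact absurd hg.symm hne
  · exact ⟨g, h, h1⟩

/-- A nonzero split morphism out of an indecomposable object exhibits it as a direct summand
of the target. -/
lemma isDirectSummand_of_split_from {R A : C} (hRind : IsIndecomposable R)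
    {h : R ⟶ A} (hne : h ≠ 0) (hsp : IsSplit h) : IsDirectSummand R A := by
  obtain ⟨g, hg⟩ := hsp
  rcases hRind.2 (h ≫ g) (by simp [reassoc_of% hg]) with h0 | h1
  · rw [← Category.assoc, h0, Limits.zero_comp] at hg
    exact absurd hg.symm hne
  · exact ⟨h, g, h1⟩

lemma splitting_eq_of_hom_to {X Q R : C} (f : X ⊗ Q ⟶ R) :
    f = (λ_ (X ⊗ Q)).inv ≫ η_ R Rᘁ ▷ (X ⊗ Q) ≫ (α_ R Rᘁ (X ⊗ Q)).hom ≫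
      R ◁ (Rᘁ ◁ f ≫ ε_ R Rᘁ) ≫ (ρ_ R).hom := by
  rw [MonoidalCategory.whiskerLeft_comp]
  slice_rhs 3 4 => rw [← associator_naturality_right]
  slice_rhs 2 3 => rw [← whisker_exchange]
  slice_rhs 3 5 => rw [ExactPairing.evaluation_coevaluation]
  simp

lemma splitting_eq_of_hom_from {X Q R : C} (f : R ⟶ X ⊗ Q) :
    f = (ρ_ R).inv ≫ R ◁ (η_ (ᘁR) R ≫ (ᘁR) ◁ f) ≫ (α_ R (ᘁR) (X ⊗ Q)).inv ≫
      ε_ (ᘁR) R ▷ (X ⊗ Q) ≫ (λ_ (X ⊗ Q)).hom := by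
  rw [MonoidalCategory.whiskerLeft_comp]
  slice_rhs 3 4 => rw [associator_inv_naturality_right]
  slice_rhs 4 5 => rw [whisker_exchange]
  slice_rhs 2 4 => rw [ExactPairing.coevaluation_evaluation]
  simp

/-- For an indecomposable splitting object `R` and any object `Q`, the following are
equivalent: (i) `Hom(X ⊗ Q, R) ≠ 0` for some `X`; (ii) `Hom(R, X ⊗ Q) ≠ 0` for some `X`;
(iii) `R` is a direct summand of `X ⊗ Q` for some `X`. -/
theorem splittingObject_summand_tfae {R : C}
    (hRind : IsIndecomposable R) (hRsplit : IsSplittingObject R) (Q : C) :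
    List.TFAE
      [∃ (X : C) (f : X ⊗ Q ⟶ R), f ≠ 0,
       ∃ (X : C) (f : R ⟶ X ⊗ Q), f ≠ 0,
       ∃ X : C, IsDirectSummand R (X ⊗ Q)] := by
  tfae_have 3 → 1 := by
    rintro ⟨X, i, r, hir⟩
    refine ⟨X, r, fun hr => hRind.1 ?_⟩
    rw [hr, Limits.comp_zero] at hir
    exact (Limits.IsZero.iff_id_eq_zero R).2 hir.symm
  tfae_have 3 → 2 := by
    rintro ⟨X, i, r, hir⟩
    refine ⟨X, i, fun hi => hRind.1 ?_⟩
    rw [hi, Limits.zero_comp] at hir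
    exact (Limits.IsZero.iff_id_eq_zero R).2 hir.symm
  tfae_have 1 → 3 := by
    rintro ⟨X, f, hf⟩
    have hsp : IsSplit ((α_ (R ⊗ Rᘁ) X Q).hom ≫ (α_ R Rᘁ (X ⊗ Q)).hom ≫
        R ◁ (Rᘁ ◁ f ≫ ε_ R Rᘁ) ≫ (ρ_ R).hom) :=
      (hRsplit (Rᘁ ◁ f ≫ ε_ R Rᘁ)).1.of_eq
        ((α_ (R ⊗ Rᘁ) X Q) ≪≫ (α_ R Rᘁ (X ⊗ Q))) (ρ_ R)
        (by simp only [Iso.trans_hom, Category.assoc])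
    have key : f = (λ_ (X ⊗ Q)).inv ≫ η_ R Rᘁ ▷ (X ⊗ Q) ≫ (α_ (R ⊗ Rᘁ) X Q).inv ≫
        ((α_ (R ⊗ Rᘁ) X Q).hom ≫ (α_ R Rᘁ (X ⊗ Q)).hom ≫
          R ◁ (Rᘁ ◁ f ≫ ε_ R Rᘁ) ≫ (ρ_ R).hom) := by
      simp only [Iso.inv_hom_id_assoc]
      exact splitting_eq_of_hom_to f
    refine ⟨(R ⊗ Rᘁ) ⊗ X, isDirectSummand_of_split_to hRind (fun h0 => hf ?_) hsp⟩
    rw [key, h0]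
    simp
  tfae_have 2 → 3 := by
    rintro ⟨X, f, hf⟩
    have hsp : IsSplit ((ρ_ R).inv ≫ R ◁ (η_ (ᘁR) R ≫ (ᘁR) ◁ f) ≫
        (α_ R (ᘁR) (X ⊗ Q)).inv ≫ (α_ (R ⊗ ᘁR) X Q).inv) :=
      (hRsplit (η_ (ᘁR) R ≫ (ᘁR) ◁ f)).1.of_eq (ρ_ R).symm
        ((α_ R (ᘁR) (X ⊗ Q)).symm ≪≫ (α_ (R ⊗ ᘁR) X Q).symm)
        (by simp only [Iso.trans_hom, Iso.symm_hom, Category.assoc])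
    have key : f = ((ρ_ R).inv ≫ R ◁ (η_ (ᘁR) R ≫ (ᘁR) ◁ f) ≫
        (α_ R (ᘁR) (X ⊗ Q)).inv ≫ (α_ (R ⊗ ᘁR) X Q).inv) ≫
        (α_ (R ⊗ ᘁR) X Q).hom ≫ ε_ (ᘁR) R ▷ (X ⊗ Q) ≫ (λ_ (X ⊗ Q)).hom := by
      simp only [Category.assoc, Iso.inv_hom_id_assoc]
      exact splitting_eq_of_hom_from f
    refine ⟨(R ⊗ ᘁR) ⊗ X, isDirectSummand_of_split_from hRind (fun h0 => hf ?_) hsp⟩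
    rw [key, h0]
    simp
  tfae_finish

end
end

section
/- Let Q, R ∈ T be indecomposable splitting objects. Then there exists X ∈ T such that R is a direct summand of X ⊗ Q if and only if there exists X' ∈ T such that Q is a direct summand of X' ⊗ R. -/
open CategoryTheory CategoryTheory.Limits CategoryTheory.MonoidalCategory

universe v u w

section

variable {k : Type w} [Field k] [IsAlgClosed k]
variable {C : Type u} [Category.{v} C] [Preadditive C] [Linear k C]
  [MonoidalCategory C] [MonoidalPreadditive C] [MonoidalLinear k C]
  [RigidCategory C] [IsIdempotentComplete C]
  [HasFiniteBiproducts C] [HasBinaryBiproducts C]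
  [∀ X Y : C, FiniteDimensional k (X ⟶ Y)]

/-- Auxiliary one-directional statement. -/
theorem splittingObject_summand_aux {Q R : C}
    (hQind : IsIndecomposable Q) (hQsplit : IsSplittingObject Q)
    (hR : ¬ IsZero R) :
    (∃ X : C, IsDirectSummand R (X ⊗ Q)) → (∃ X' : C, IsDirectSummand Q (X' ⊗ R)) := by
  rintro ⟨X, i, r, hir⟩
  -- the canonical map `Q → Q ⊗ (ᘁR ⊗ R)` is split since `Q` is a splitting object
  obtain ⟨g, hg⟩ := (hQsplit (η_ (ᘁR) R)).1
  set w := Q ◁ (η_ (ᘁR) R) with hw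
  have hidem : ((ρ_ Q).inv ≫ w ≫ g ≫ (ρ_ Q).hom) ≫ ((ρ_ Q).inv ≫ w ≫ g ≫ (ρ_ Q).hom)
      = (ρ_ Q).inv ≫ w ≫ g ≫ (ρ_ Q).hom := by
    have := hg
    simp only [Category.assoc, Iso.hom_inv_id_assoc]
    slice_lhs 2 4 => rw [hg]
    simp
  rcases hQind.2 _ hidem with h0 | h1
  · -- then `Q ◁ η = 0`, which forces `𝟙 R = 0`, contradiction
    exfalso
    have hwg : w ≫ g = 0 := by
      have h := congrArg (fun t => (ρ_ Q).hom ≫ t ≫ (ρ_ Q).inv) h0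
      simpa [Category.assoc] using h
    have hw0 : Q ◁ (η_ (ᘁR) R) = 0 := by
      have : w = (w ≫ g) ≫ w := by rw [Category.assoc, hg]
      rw [hwg, zero_comp] at this
      simpa [hw] using this
    have hXQ : (X ⊗ Q) ◁ (η_ (ᘁR) R) = 0 := by
      rw [tensor_whiskerLeft, hw0]
      simp
    have hRcoev : R ◁ (η_ (ᘁR) R) = 0 := by
      have hx := whisker_exchange i (η_ (ᘁR) R)
      rw [hXQ, comp_zero] at hx
      have h5 := congrArg
        (fun t => t ≫ MonoidalCategory.whiskerRight r (MonoidalCategory.tensorObj (ᘁR) R)) hx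
      simp only [Category.assoc, ← comp_whiskerRight, hir, id_whiskerRight,
        Category.comp_id, zero_comp] at h5
      exact h5
    have hzig := ExactPairing.coevaluation_evaluation (ᘁR) R
    rw [hRcoev, zero_comp] at hzig
    have : 𝟙 R = 0 := by
      have h := congrArg (fun t => (ρ_ R).inv ≫ t ≫ (λ_ R).hom) hzig.symm
      simpa using h
    exact hR ((IsZero.iff_id_eq_zero R).2 this)
  · -- then `Q` is a direct summand of `(Q ⊗ ᘁR) ⊗ R`
    refine ⟨Q ⊗ ᘁR, (ρ_ Q).inv ≫ w ≫ (α_ Q (ᘁR) R).inv,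
      (α_ Q (ᘁR) R).hom ≫ g ≫ (ρ_ Q).hom, ?_⟩
    simp only [Category.assoc, Iso.inv_hom_id_assoc]
    exact h1

/-- For indecomposable splitting objects `Q, R`: `R` is a direct summand of `X ⊗ Q` for some
`X` if and only if `Q` is a direct summand of `X' ⊗ R` for some `X'`. -/
theorem splittingObject_summand_symm {Q R : C}
    (hQind : IsIndecomposable Q) (hQsplit : IsSplittingObject Q)
    (hRind : IsIndecomposable R) (hRsplit : IsSplittingObject R) :
    (∃ X : C, IsDirectSummand R (X ⊗ Q)) ↔ (∃ X' : C, IsDirectSummand Q (X' ⊗ R)) :=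
  ⟨splittingObject_summand_aux hQind hQsplit hRind.1,
   splittingObject_summand_aux hRind hRsplit hQind.1⟩

end
end

section
/- If T is separated, then the endomorphism algebra End(𝟙) of the unit object of T is a semisimple (commutative, finite-dimensional) k-algebra; equivalently, it is reduced, hence isomorphic to a finite product of copies of k. -/
/-! By Eckmann–Hilton `End(𝟙)` is commutative, and it is finite-dimensional, hence Artinian; so
it suffices to show that it is reduced, since a reduced finite-dimensional commutative algebra over
an algebraically closed field is a product of copies of `k`. If `x` is nilpotent and `Q` is a
splitting object, then `u = Q ◁ x` satisfies `u g u = u` for some `g`, and `u` is central by the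
interchange law, so `u = (u g)ⁿ u = uⁿ gⁿ u = 0`; separatedness then forces `x = 0`. -/

open CategoryTheory CategoryTheory.Limits CategoryTheory.MonoidalCategory

universe v u w

theorem IsNilpotent.eq_zero_of_mul_mul_self {M : Type*} [MonoidWithZero M] {u g : M}
    (hu : IsNilpotent u) (hcomm : Commute u g) (hsplit : u * g * u = u) : u = 0 := by
  obtain ⟨n, hn⟩ := hu
  have hpow : ∀ m : ℕ, (u * g) ^ m * u = u := fun m => by
    induction m with
    | zero => rw [pow_zero, one_mul]
    | succ m ih => rw [_root_.pow_succ, mul_assoc, hsplit, ih]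
  rw [← hpow n, hcomm.mul_pow, hn, zero_mul, zero_mul]

theorem Algebra.IsFiniteSplit.of_isReduced_of_isAlgClosed (k R : Type*) [Field k] [IsAlgClosed k]
    [CommRing R] [Algebra k R] [FiniteDimensional k R] [IsReduced R] :
    Algebra.IsFiniteSplit k R := by
  have := IsArtinianRing.of_finite k R
  have residueField (I : MaximalSpectrum R) : (R ⧸ I.asIdeal) ≃ₐ[k] k :=
    (AlgEquiv.ofBijective (Algebra.ofId k _) IsAlgClosed.algebraMap_bijective_of_isIntegral).symm
  exact .of_algEquiv (((IsArtinianRing.equivPi R).restrictScalars k).trans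
    (AlgEquiv.piCongrRight residueField)).symm

namespace CategoryTheory

theorem Functor.isNilpotent_mapEnd {C D : Type*} [Category C] [Preadditive C] [Category D]
    [Preadditive D] (F : C ⥤ D) [F.PreservesZeroMorphisms] {X : C} {x : End X}
    (hx : IsNilpotent x) : IsNilpotent (F.mapEnd X x) := by
  obtain ⟨n, hn⟩ := hx
  exact ⟨n, by rw [← map_pow, hn]; exact F.map_zero X X⟩

namespace MonoidalCategory

variable {C : Type*} [Category C] [MonoidalCategory C]

theorem unit_endo_comp_comm (f g : 𝟙_ C ⟶ 𝟙_ C) : f ≫ g = g ≫ f := by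
  have h := congrArg (· ≫ (λ_ (𝟙_ C)).hom) (whisker_exchange f g)
  simp only [Category.assoc, leftUnitor_naturality] at h
  rw [unitors_equal, rightUnitor_naturality, rightUnitor_naturality_assoc, ← unitors_equal,
    leftUnitor_naturality_assoc, unitors_equal, cancel_epi] at h
  exact h.symm

theorem whiskerLeft_unit_endo_comm {X Y : C} (f : 𝟙_ C ⟶ 𝟙_ C) (h : X ⊗ 𝟙_ C ⟶ Y ⊗ 𝟙_ C) :
    X ◁ f ≫ h = h ≫ Y ◁ f := by
  have hh : ((ρ_ X).inv ≫ h ≫ (ρ_ Y).hom) ▷ 𝟙_ C = h := by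
    rw [← cancel_mono (ρ_ Y).hom, rightUnitor_naturality]
    simp
  rw [← hh]
  exact whisker_exchange _ f

abbrev endUnitCommRing (C : Type*) [Category C] [Preadditive C] [MonoidalCategory C] :
    CommRing (End (𝟙_ C)) :=
  { (inferInstance : Ring (End (𝟙_ C))) with
    mul_comm := fun f g => unit_endo_comp_comm g f }

def IsSeparated (C : Type*) [Category C] [Limits.HasZeroMorphisms C] [MonoidalCategory C] :
    Prop :=
  ∀ ⦃X Y : C⦄ (f : X ⟶ Y), f ≠ 0 → ∃ Q : C, IsSplittingObject Q ∧ Q ◁ f ≠ 0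

theorem IsSeparated.isReduced_end_unit [Preadditive C] [MonoidalPreadditive C]
    (hsep : IsSeparated C) : IsReduced (End (𝟙_ C)) := by
  refine ⟨fun x hx => by_contra fun hx0 => ?_⟩
  obtain ⟨Q, hQ, hne⟩ := hsep x hx0
  obtain ⟨g, hg⟩ := (hQ x).1
  exact hne (((tensorLeft Q).isNilpotent_mapEnd hx).eq_zero_of_mul_mul_self
    (whiskerLeft_unit_endo_comm x g).symm hg)

end MonoidalCategory

end CategoryTheory

section

variable {k : Type w} [Field k] [IsAlgClosed k]
variable {C : Type u} [Category.{v} C] [Preadditive C] [Linear k C]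
  [MonoidalCategory C] [MonoidalPreadditive C] [MonoidalLinear k C]
  [RigidCategory C] [IsIdempotentComplete C]
  [HasFiniteBiproducts C] [HasBinaryBiproducts C]
  [∀ X Y : C, FiniteDimensional k (X ⟶ Y)]

/-- If `T` is separated, then `End(𝟙)` is a semisimple (commutative, finite-dimensional)
`k`-algebra; equivalently, it is reduced, hence isomorphic to a finite product of copies
of `k`. -/
theorem end_unit_semisimple_of_separated
    (hsep : ∀ ⦃X Y : C⦄ (f : X ⟶ Y), f ≠ 0 → ∃ Q : C, IsSplittingObject Q ∧ Q ◁ f ≠ 0) :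
    IsSemisimpleRing (End (𝟙_ C)) ∧ IsReduced (End (𝟙_ C)) ∧
      ∃ m : ℕ, Nonempty (End (𝟙_ C) ≃ₐ[k] (Fin m → k)) := by
  let := endUnitCommRing C
  have hred : IsReduced (End (𝟙_ C)) := IsSeparated.isReduced_end_unit hsep
  have : FiniteDimensional k (End (𝟙_ C)) := inferInstanceAs (FiniteDimensional k (𝟙_ C ⟶ 𝟙_ C))
  have := IsArtinianRing.of_finite k (End (𝟙_ C))
  have := Algebra.IsFiniteSplit.of_isReduced_of_isAlgClosed k (End (𝟙_ C))
  exact ⟨IsArtinianRing.isSemisimpleRing_of_isReduced _, hred,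
    Algebra.IsFiniteSplit.nonempty_algEquiv_fun k _⟩

end
end

section
/- Let D be an abelian monoidal category in which the tensor product is exact in each variable, and let f : Q_1 → Q_0 be a morphism such that Q_0 and Q_1 are rigid (admit left and right duals). Then the cokernel X of f is rigid. More precisely, the kernel of the dual morphism f* : Q_0* → Q_1* is a left dual of X (with evaluation and coevaluation induced from those of Q_0), and the kernel of *f : *Q_0 → *Q_1 is a right dual of X. -/
open CategoryTheory CategoryTheory.Limits CategoryTheory.MonoidalCategory

universe v u

variable {D : Type u} [Category.{v} D] [MonoidalCategory D]

/-- Abstract construction: a quotient of the first and a compatible subobject of the second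
member of an exact pairing again form an exact pairing. -/
noncomputable def exactPairingOfEpiMono {A B X Y : D} [ExactPairing A B]
    (p : A ⟶ X) (i : Y ⟶ B) [Epi p] [Mono i]
    (η : 𝟙_ D ⟶ X ⊗ Y) (ε : Y ⊗ X ⟶ 𝟙_ D)
    (hη : η ≫ X ◁ i = η_ A B ≫ p ▷ B)
    (hε : Y ◁ p ≫ ε = i ▷ A ≫ ε_ A B) :
    ExactPairing X Y where
  coevaluation' := η
  evaluation' := ε
  coevaluation_evaluation' := by
    haveI : Mono (𝟙_ D ◁ i) := by
      rw [MonoidalCategory.id_whiskerLeft]; infer_instance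
    rw [← cancel_mono (𝟙_ D ◁ i)]
    calc (Y ◁ η ≫ (α_ Y X Y).inv ≫ ε ▷ Y) ≫ 𝟙_ D ◁ i
        = 𝟙 _ ⊗≫ Y ◁ η ⊗≫ (ε ▷ Y ≫ 𝟙_ D ◁ i) := by monoidal
      _ = 𝟙 _ ⊗≫ Y ◁ (η ≫ X ◁ i) ⊗≫ ε ▷ B := by rw [← whisker_exchange]; monoidal
      _ = 𝟙 _ ⊗≫ Y ◁ η_ A B ⊗≫ (Y ◁ p ≫ ε) ▷ B ⊗≫ 𝟙 _ := by rw [hη]; monoidal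
      _ = 𝟙 _ ⊗≫ (Y ◁ η_ A B ≫ i ▷ (A ⊗ B)) ⊗≫ ε_ A B ▷ B ⊗≫ 𝟙 _ := by rw [hε]; monoidal
      _ = 𝟙 _ ⊗≫ i ▷ 𝟙_ D ⊗≫ (B ◁ η_ A B ⊗≫ ε_ A B ▷ B) ⊗≫ 𝟙 _ := by
          rw [whisker_exchange]; monoidal
      _ = ((ρ_ Y).hom ≫ (λ_ Y).inv) ≫ 𝟙_ D ◁ i := by
          rw [ExactPairing.coevaluation_evaluation'']; monoidal
  evaluation_coevaluation' := by
    haveI : Epi (𝟙_ D ◁ p) := by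
      rw [MonoidalCategory.id_whiskerLeft]; infer_instance
    rw [← cancel_epi (𝟙_ D ◁ p)]
    calc 𝟙_ D ◁ p ≫ η ▷ X ≫ (α_ X Y X).hom ≫ X ◁ ε
        = (𝟙_ D ◁ p ≫ η ▷ X) ⊗≫ X ◁ ε := by monoidal
      _ = η ▷ A ⊗≫ X ◁ (Y ◁ p ≫ ε) ⊗≫ 𝟙 _ := by rw [whisker_exchange]; monoidal
      _ = 𝟙 _ ⊗≫ (η ≫ X ◁ i) ▷ A ⊗≫ X ◁ ε_ A B ⊗≫ 𝟙 _ := by rw [hε]; monoidal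
      _ = 𝟙 _ ⊗≫ η_ A B ▷ A ⊗≫ ((p ▷ B) ▷ A ⊗≫ X ◁ ε_ A B) ⊗≫ 𝟙 _ := by rw [hη]; monoidal
      _ = 𝟙 _ ⊗≫ η_ A B ▷ A ⊗≫ (p ▷ (B ⊗ A) ≫ X ◁ ε_ A B) ⊗≫ 𝟙 _ := by monoidal
      _ = 𝟙 _ ⊗≫ (η_ A B ▷ A ⊗≫ A ◁ ε_ A B) ⊗≫ p ▷ 𝟙_ D ⊗≫ 𝟙 _ := by
          rw [← whisker_exchange]; monoidal
      _ = 𝟙_ D ◁ p ≫ (λ_ X).hom ≫ (ρ_ X).inv := by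
          rw [ExactPairing.evaluation_coevaluation'']; monoidal

/-- Mirror version: a subobject of the first and a compatible quotient of the second member
of an exact pairing again form an exact pairing. -/
noncomputable def exactPairingOfMonoEpi {A B X Y : D} [ExactPairing A B]
    (i : X ⟶ A) (p : B ⟶ Y) [Mono i] [Epi p]
    (η : 𝟙_ D ⟶ X ⊗ Y) (ε : Y ⊗ X ⟶ 𝟙_ D)
    (hη : η ≫ i ▷ Y = η_ A B ≫ A ◁ p)
    (hε : p ▷ X ≫ ε = B ◁ i ≫ ε_ A B) :
    ExactPairing X Y where
  coevaluation' := η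
  evaluation' := ε
  coevaluation_evaluation' := by
    haveI : Epi (p ▷ 𝟙_ D) := by
      rw [MonoidalCategory.whiskerRight_id]; infer_instance
    rw [← cancel_epi (p ▷ 𝟙_ D)]
    calc p ▷ 𝟙_ D ≫ Y ◁ η ≫ (α_ Y X Y).inv ≫ ε ▷ Y
        = (p ▷ 𝟙_ D ≫ Y ◁ η) ⊗≫ ε ▷ Y := by monoidal
      _ = 𝟙 _ ⊗≫ B ◁ η ⊗≫ (p ▷ X ≫ ε) ▷ Y ⊗≫ 𝟙 _ := by rw [← whisker_exchange]; monoidal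
      _ = 𝟙 _ ⊗≫ B ◁ (η ≫ i ▷ Y) ⊗≫ ε_ A B ▷ Y ⊗≫ 𝟙 _ := by rw [hε]; monoidal
      _ = 𝟙 _ ⊗≫ B ◁ η_ A B ⊗≫ ((B ⊗ A) ◁ p ≫ ε_ A B ▷ Y) ⊗≫ 𝟙 _ := by rw [hη]; monoidal
      _ = 𝟙 _ ⊗≫ (B ◁ η_ A B ⊗≫ ε_ A B ▷ B) ⊗≫ 𝟙_ D ◁ p ⊗≫ 𝟙 _ := by
          rw [whisker_exchange]; monoidal
      _ = p ▷ 𝟙_ D ≫ (ρ_ Y).hom ≫ (λ_ Y).inv := by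
          rw [ExactPairing.coevaluation_evaluation'']; monoidal
  evaluation_coevaluation' := by
    haveI : Mono (i ▷ 𝟙_ D) := by
      rw [MonoidalCategory.whiskerRight_id]; infer_instance
    rw [← cancel_mono (i ▷ 𝟙_ D)]
    calc (η ▷ X ≫ (α_ X Y X).hom ≫ X ◁ ε) ≫ i ▷ 𝟙_ D
        = 𝟙 _ ⊗≫ η ▷ X ⊗≫ (X ◁ ε ≫ i ▷ 𝟙_ D) := by monoidal
      _ = 𝟙 _ ⊗≫ (η ≫ i ▷ Y) ▷ X ⊗≫ A ◁ ε ⊗≫ 𝟙 _ := by rw [whisker_exchange]; monoidal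
      _ = 𝟙 _ ⊗≫ η_ A B ▷ X ⊗≫ A ◁ (p ▷ X ≫ ε) ⊗≫ 𝟙 _ := by rw [hη]; monoidal
      _ = 𝟙 _ ⊗≫ (η_ A B ▷ X ≫ (A ⊗ B) ◁ i) ⊗≫ A ◁ ε_ A B ⊗≫ 𝟙 _ := by rw [hε]; monoidal
      _ = 𝟙 _ ⊗≫ 𝟙_ D ◁ i ⊗≫ (η_ A B ▷ A ⊗≫ A ◁ ε_ A B) ⊗≫ 𝟙 _ := by
          rw [← whisker_exchange]; monoidal
      _ = ((λ_ X).hom ≫ (ρ_ X).inv) ≫ i ▷ 𝟙_ D := by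
          rw [ExactPairing.evaluation_coevaluation'']; monoidal

lemma zero_whiskerRight'' {D : Type u} [Category.{v} D] [Abelian D]
    [MonoidalCategory D] {P Q : D} (R : D) [PreservesFiniteColimits (tensorRight R)] :
    (0 : P ⟶ Q) ▷ R = 0 := by
  have h := (tensorRight R).map_zero P Q
  simpa using h

lemma whiskerLeft_zero'' {D : Type u} [Category.{v} D] [Abelian D]
    [MonoidalCategory D] {P Q : D} (R : D) [PreservesFiniteColimits (tensorLeft R)] :
    R ◁ (0 : P ⟶ Q) = 0 := by
  have h := (tensorLeft R).map_zero P Q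
  simpa using h


/-- Let `D` be an abelian monoidal category with tensor product exact in each variable, and
let `f : Q₁ ⟶ Q₀` be a morphism between rigid objects. Then the cokernel `X` of `f` is rigid:
the kernel of `fᘁ : Q₀ᘁ ⟶ Q₁ᘁ` is a (left) dual of `X` (i.e. pairs exactly with `X` via
evaluation `Xᘁ ⊗ X ⟶ 𝟙` and coevaluation `𝟙 ⟶ X ⊗ Xᘁ`), and the kernel of
`ᘁf : ᘁQ₀ ⟶ ᘁQ₁` is a (right) dual of `X`. -/
theorem cokernel_rigid {D : Type u} [Category.{v} D] [Abelian D] [MonoidalCategory D]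
    [∀ X : D, PreservesFiniteLimits (tensorLeft X)]
    [∀ X : D, PreservesFiniteColimits (tensorLeft X)]
    [∀ X : D, PreservesFiniteLimits (tensorRight X)]
    [∀ X : D, PreservesFiniteColimits (tensorRight X)]
    {Q₀ Q₁ : D} [HasRightDual Q₀] [HasRightDual Q₁] [HasLeftDual Q₀] [HasLeftDual Q₁]
    (f : Q₁ ⟶ Q₀) :
    Nonempty (ExactPairing (cokernel f) (kernel (fᘁ))) ∧
    Nonempty (ExactPairing (kernel ((ᘁf))) (cokernel f)) := by
  constructor
  · -- left dual of the cokernel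
    obtain ⟨ε, hε⟩ := CokernelCofork.IsColimit.desc'
      (isColimitCoforkMapOfIsColimit' (tensorLeft (kernel (rightAdjointMate f)))
        (cokernel.condition f) (cokernelIsCokernel f))
      (kernel.ι (rightAdjointMate f) ▷ Q₀ ≫ ε_ Q₀ (Q₀ᘁ)) (by
        show kernel (rightAdjointMate f) ◁ f ≫
          kernel.ι (rightAdjointMate f) ▷ Q₀ ≫ ε_ Q₀ (Q₀ᘁ) = 0
        rw [← Category.assoc, whisker_exchange, Category.assoc,
          ← rightAdjointMate_comp_evaluation, ← Category.assoc, ← comp_whiskerRight,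
          kernel.condition, zero_whiskerRight'', zero_comp])
    obtain ⟨η, hη⟩ := KernelFork.IsLimit.lift'
      (isLimitForkMapOfIsLimit' (tensorLeft (cokernel f))
        (kernel.condition (rightAdjointMate f)) (kernelIsKernel (rightAdjointMate f)))
      (η_ Q₀ (Q₀ᘁ) ≫ cokernel.π f ▷ (Q₀ᘁ)) (by
        show (η_ Q₀ (Q₀ᘁ) ≫ cokernel.π f ▷ (Q₀ᘁ)) ≫ cokernel f ◁ rightAdjointMate f = 0
        rw [Category.assoc, ← whisker_exchange, ← Category.assoc,
          coevaluation_comp_rightAdjointMate, Category.assoc, ← comp_whiskerRight,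
          cokernel.condition, zero_whiskerRight'', comp_zero])
    exact ⟨exactPairingOfEpiMono (cokernel.π f) (kernel.ι (rightAdjointMate f)) η ε hη hε⟩
  · -- right dual of the cokernel
    obtain ⟨ε, hε⟩ := CokernelCofork.IsColimit.desc'
      (isColimitCoforkMapOfIsColimit' (tensorRight (kernel (leftAdjointMate f)))
        (cokernel.condition f) (cokernelIsCokernel f))
      (Q₀ ◁ kernel.ι (leftAdjointMate f) ≫ ε_ ((ᘁQ₀)) Q₀) (by
        show f ▷ kernel (leftAdjointMate f) ≫
          Q₀ ◁ kernel.ι (leftAdjointMate f) ≫ ε_ ((ᘁQ₀)) Q₀ = 0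
        rw [← Category.assoc, ← whisker_exchange, Category.assoc,
          ← leftAdjointMate_comp_evaluation, ← Category.assoc, ← MonoidalCategory.whiskerLeft_comp,
          kernel.condition, whiskerLeft_zero'', zero_comp])
    obtain ⟨η, hη⟩ := KernelFork.IsLimit.lift'
      (isLimitForkMapOfIsLimit' (tensorRight (cokernel f))
        (kernel.condition (leftAdjointMate f)) (kernelIsKernel (leftAdjointMate f)))
      (η_ ((ᘁQ₀)) Q₀ ≫ (ᘁQ₀) ◁ cokernel.π f) (by
        show (η_ ((ᘁQ₀)) Q₀ ≫ (ᘁQ₀) ◁ cokernel.π f) ≫ leftAdjointMate f ▷ cokernel f = 0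
        rw [Category.assoc, whisker_exchange, ← Category.assoc,
          coevaluation_comp_leftAdjointMate, Category.assoc, ← MonoidalCategory.whiskerLeft_comp,
          cokernel.condition, whiskerLeft_zero'', comp_zero])
    exact ⟨exactPairingOfMonoEpi (kernel.ι (leftAdjointMate f)) (cokernel.π f) η ε hη hε⟩
end

section
/- Suppose there exist a k-linear abelian rigid monoidal category D with k-bilinear tensor product, finite-dimensional Hom-spaces, objects of finite length, and enough projectives (a multitensor category with enough projectives), and a faithful k-linear monoidal functor E : T → D such that every projective object of D is isomorphic to E(Q) for some Q ∈ T, and for all Q, Q' ∈ T with E(Q), E(Q') projective in D, the map Hom_T(Q, Q') → Hom_D(E(Q), E(Q')) is surjective. Then T is separated: for every nonzero morphism f : X → Y in T there exists a splitting object Q ∈ T with id_Q ⊗ f ≠ 0. -/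
/-!
Choose an epimorphism `P₀ ⟶ 𝟙` from a projective object of `D` and put `P = P₀ ⊗ P₀ᘁ`. In a
rigid category tensoring with an object has adjoints on both sides, so it is exact and preserves
projectives and injectives; since duality turns the projective `P₀` into the injective `P₀ᘁ`, every
`P ⊗ A` and `A ⊗ P` is projective and injective, and the coevaluation `𝟙 ⟶ P` is a monomorphism.
Hence `P ◁ g` factors as an epimorphism onto and a monomorphism out of the projective-injective
object `P ⊗ im g`, so it is split, and `P ◁ g = 0` forces `g = 0`. For `Q` with `E(Q) ≅ P`, a
splitting of `E(Q ◁ g)` lifts to `T` because `E` is full between objects with projective image,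
and faithfulness of `E` gives `Q ◁ f ≠ 0`.
-/

open CategoryTheory CategoryTheory.Limits CategoryTheory.MonoidalCategory

universe v u w

theorem IsSplit.iso_comp_comp_iso {C : Type*} [Category C] {X' X Y Y' : C} {f : X ⟶ Y}
    (hf : IsSplit f) (a : X' ⟶ X) (b : Y ⟶ Y') [IsIso a] [IsIso b] : IsSplit (a ≫ f ≫ b) := by
  obtain ⟨g, hg⟩ := hf
  exact ⟨inv b ≫ g ≫ inv a, by simp [reassoc_of% hg]⟩

theorem IsSplit.epi_comp_mono {C : Type*} [Category C] {X I Y : C} (e : X ⟶ I) (m : I ⟶ Y)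
    [Epi e] [Mono m] [Projective I] [Injective I] : IsSplit (e ≫ m) :=
  ⟨Injective.factorThru (𝟙 I) m ≫ Projective.factorThru (𝟙 I) e, by simp⟩

theorem IsSplit.of_map {C D : Type*} [Category C] [Category D] (E : C ⥤ D) [E.Faithful]
    {A B : C} {g : A ⟶ B} (hfull : Function.Surjective (fun h : B ⟶ A => E.map h))
    (hg : IsSplit (E.map g)) : IsSplit g := by
  obtain ⟨h, hh⟩ := hg
  obtain ⟨t, rfl⟩ := hfull h
  exact ⟨t, E.map_injective (by simpa using hh)⟩

namespace CategoryTheory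

section Monoidal

variable {D : Type*} [Category D] [MonoidalCategory D]

instance mono_coevaluation_whiskerRight (X Y : D) [ExactPairing X Y] : Mono (η_ X Y ▷ X) :=
  mono_of_mono_fac (ExactPairing.evaluation_coevaluation X Y)

theorem rightAdjointMate_leftAdjointMate {X Y : D} [HasLeftDual X] [HasLeftDual Y] (f : X ⟶ Y) :
    ((ᘁf)ᘁ : X ⟶ Y) = f := by
  rw [← cancel_mono (λ_ Y).inv]
  have h := (rightAdjointMate_comp_evaluation (ᘁf)).trans (leftAdjointMate_comp_evaluation f)
  have h₁ := tensorRightHomEquiv_whiskerRight_comp_evaluation (X := ᘁY) ((ᘁf)ᘁ : X ⟶ Y)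
  have h₂ := tensorRightHomEquiv_whiskerRight_comp_evaluation (X := ᘁY) (f : X ⟶ (ᘁY)ᘁ)
  exact h₁.symm.trans ((congrArg _ h).trans h₂)

end Monoidal

section Rigid

variable {D : Type*} [Category D] [MonoidalCategory D] [RigidCategory D]

instance (A : D) : (tensorLeft A).IsLeftAdjoint := (tensorLeftAdjunction (ᘁA) A).isLeftAdjoint
instance (A : D) : (tensorLeft A).IsRightAdjoint := (tensorLeftAdjunction A (Aᘁ)).isRightAdjoint
instance (A : D) : (tensorRight A).IsLeftAdjoint := (tensorRightAdjunction A (Aᘁ)).isLeftAdjoint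
instance (A : D) : (tensorRight A).IsRightAdjoint :=
  (tensorRightAdjunction (ᘁA) A).isRightAdjoint

instance epi_whiskerLeft (A : D) {X Y : D} (g : X ⟶ Y) [Epi g] : Epi (A ◁ g) :=
  (tensorLeft A).map_epi g

instance mono_whiskerLeft (A : D) {X Y : D} (g : X ⟶ Y) [Mono g] : Mono (A ◁ g) :=
  (tensorLeft A).map_mono g

instance epi_whiskerRight {X Y : D} (g : X ⟶ Y) [Epi g] (A : D) : Epi (g ▷ A) :=
  (tensorRight A).map_epi g

instance mono_whiskerRight {X Y : D} (g : X ⟶ Y) [Mono g] (A : D) : Mono (g ▷ A) :=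
  (tensorRight A).map_mono g

theorem projective_tensor_right (P : D) [Projective P] (A : D) : Projective (P ⊗ A) :=
  (tensorRightAdjunction A (Aᘁ)).map_projective P ‹_›

theorem projective_tensor_left (A : D) (P : D) [Projective P] : Projective (A ⊗ P) :=
  (tensorLeftAdjunction (ᘁA) A).map_projective P ‹_›

theorem injective_tensor_right (J : D) [Injective J] (A : D) : Injective (J ⊗ A) :=
  (tensorRightAdjunction (ᘁA) A).map_injective J ‹_›

theorem injective_tensor_left (A : D) (J : D) [Injective J] : Injective (A ⊗ J) :=
  (tensorLeftAdjunction A (Aᘁ)).map_injective J ‹_›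

theorem whiskerLeft_injective_of_mono {P : D} (i : 𝟙_ D ⟶ P) [Mono i] (X Y : D) :
    Function.Injective (fun g : X ⟶ Y => P ◁ g) := by
  intro g₁ g₂ h
  have hunit : 𝟙_ D ◁ g₁ = 𝟙_ D ◁ g₂ := by
    rw [← cancel_mono (i ▷ Y), whisker_exchange, whisker_exchange]
    exact congrArg _ h
  simpa using hunit

instance epi_leftAdjointMate {A B : D} (m : A ⟶ B) [Mono m] : Epi (ᘁm) where
  left_cancellation {W} t₁ t₂ h := by
    have hcomp : ∀ t : (ᘁA : D) ⟶ W,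
        η_ (ᘁB) B ≫ ((ᘁm) ≫ t) ▷ B = (η_ (ᘁA) A ≫ t ▷ A) ≫ W ◁ m := by
      intro t
      rw [comp_whiskerRight, coevaluation_comp_leftAdjointMate_assoc, Category.assoc,
        whisker_exchange]
    have h' : η_ (ᘁA) A ≫ t₁ ▷ A = η_ (ᘁA) A ≫ t₂ ▷ A := by
      rw [← cancel_mono (W ◁ m), ← hcomp, ← hcomp, h]
    simpa using congrArg (tensorRightHomEquiv _ (ᘁA) A W).symm h'

theorem injective_rightDual (P : D) [Projective P] : Injective (Pᘁ) where
  factors {A B} g m _ := by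
    -- makes `ᘁ(Pᘁ)` be `P` itself rather than the left dual chosen by the rigid structure
    let _ : HasLeftDual (Pᘁ) := hasLeftDualRightDual
    let u : P ⟶ ᘁB := Projective.factorThru (ᘁg) (ᘁm)
    refine ⟨(uᘁ : B ⟶ Pᘁ), ?_⟩
    calc m ≫ uᘁ = (ᘁm)ᘁ ≫ uᘁ := by rw [rightAdjointMate_leftAdjointMate]
      _ = (u ≫ ᘁm)ᘁ := comp_rightAdjointMate.symm
      _ = g := by rw [Projective.factorThru_comp, rightAdjointMate_leftAdjointMate]

theorem mono_coevaluation_of_epi {P : D} (p : P ⟶ 𝟙_ D) [Epi p] : Mono (η_ P (Pᘁ)) where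
  right_cancellation {W} g₁ g₂ h := by
    have hP : g₁ ▷ P = g₂ ▷ P := by
      rw [← cancel_mono (η_ P (Pᘁ) ▷ P), ← comp_whiskerRight, h, comp_whiskerRight]
    have hunit : g₁ ▷ 𝟙_ D = g₂ ▷ 𝟙_ D := by
      rw [← cancel_epi (W ◁ p), whisker_exchange, hP, whisker_exchange]
    simpa using hunit

end Rigid

theorem exists_projective_injective_with_mono_from_unit (D : Type*) [Category D]
    [MonoidalCategory D] [RigidCategory D] [EnoughProjectives D] :
    ∃ P : D, Projective P ∧ Injective P ∧ ∃ i : 𝟙_ D ⟶ P, Mono i :=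
  have := injective_rightDual (Projective.over (𝟙_ D))
  ⟨_, projective_tensor_right _ _, injective_tensor_left _ _, _,
    mono_coevaluation_of_epi (Projective.π (𝟙_ D))⟩

section Abelian

variable {D : Type*} [Category D] [Abelian D] [MonoidalCategory D] [RigidCategory D]

theorem isSplit_whiskerLeft_of_projective_of_injective (P : D) [Projective P] [Injective P]
    {X Y : D} (g : X ⟶ Y) : IsSplit (P ◁ g) := by
  have := projective_tensor_right P (Abelian.image g)
  have := injective_tensor_right P (Abelian.image g)
  rw [← Abelian.image.fac g, MonoidalCategory.whiskerLeft_comp]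
  exact IsSplit.epi_comp_mono _ _

theorem isSplit_whiskerRight_of_projective_of_injective (P : D) [Projective P] [Injective P]
    {X Y : D} (g : X ⟶ Y) : IsSplit (g ▷ P) := by
  have := projective_tensor_left (Abelian.image g) P
  have := injective_tensor_left (Abelian.image g) P
  rw [← Abelian.image.fac g, MonoidalCategory.comp_whiskerRight]
  exact IsSplit.epi_comp_mono _ _

end Abelian

end CategoryTheory

section

variable {k : Type w} [Field k] [IsAlgClosed k]
variable {C : Type u} [Category.{v} C] [Preadditive C] [Linear k C]
  [MonoidalCategory C] [MonoidalPreadditive C] [MonoidalLinear k C]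
  [RigidCategory C] [IsIdempotentComplete C]
  [HasFiniteBiproducts C] [HasBinaryBiproducts C]
  [∀ X Y : C, FiniteDimensional k (X ⟶ Y)]

universe v₂ u₂

/-- Suppose there exist a multitensor category `D` with enough projectives and a faithful
`k`-linear monoidal functor `E : T ⥤ D` such that every projective object of `D` is (up to
isomorphism) of the form `E(Q)`, and `E` is full on objects with projective image. Then `T`
is separated: for every nonzero morphism `f : X ⟶ Y` in `T` there is a splitting object `Q`
with `id_Q ⊗ f ≠ 0`. -/
theorem separated_of_faithful_functor_full_on_projectives
    {D : Type u₂} [Category.{v₂} D] [Abelian D] [Linear k D]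
    [MonoidalCategory D] [MonoidalPreadditive D] [MonoidalLinear k D]
    [RigidCategory D] [∀ X Y : D, FiniteDimensional k (X ⟶ Y)]
    [EnoughProjectives D]
    (hNoeth : ∀ X : D, IsNoetherianObject X) (hArt : ∀ X : D, IsArtinianObject X)
    (E : C ⥤ D) [E.Monoidal] [E.Faithful] [E.Additive] [E.Linear k]
    (hProjSurj : ∀ P : D, Projective P → ∃ Q : C, Nonempty (E.obj Q ≅ P))
    (hProjFull : ∀ Q Q' : C, Projective (E.obj Q) → Projective (E.obj Q') →
      Function.Surjective (fun g : Q ⟶ Q' => E.map g))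
    {X Y : C} (f : X ⟶ Y) (hf : f ≠ 0) :
    ∃ Q : C, IsSplittingObject Q ∧ Q ◁ f ≠ 0 := by
  obtain ⟨P, _, _, i, _⟩ := exists_projective_injective_with_mono_from_unit D
  obtain ⟨Q, ⟨e⟩⟩ := hProjSurj P ‹_›
  have : Projective (E.obj Q) := Projective.of_iso e.symm ‹_›
  have : Injective (E.obj Q) := Injective.of_iso e.symm ‹_›
  have hQA (A : C) : Projective (E.obj (Q ⊗ A)) :=
    Projective.of_iso (Functor.Monoidal.μIso E Q A) (projective_tensor_right _ _)
  have hAQ (A : C) : Projective (E.obj (A ⊗ Q)) :=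
    Projective.of_iso (Functor.Monoidal.μIso E A Q) (projective_tensor_left _ _)
  refine ⟨Q, fun A B g => ⟨?_, ?_⟩, fun hQf => hf (E.map_eq_zero_iff.1 ?_)⟩
  · refine IsSplit.of_map E (hProjFull _ _ (hQA B) (hQA A)) ?_
    rw [Functor.Monoidal.map_whiskerLeft]
    exact (isSplit_whiskerLeft_of_projective_of_injective _ _).iso_comp_comp_iso _ _
  · refine IsSplit.of_map E (hProjFull _ _ (hAQ B) (hAQ A)) ?_
    rw [Functor.Monoidal.map_whiskerRight]
    exact (isSplit_whiskerRight_of_projective_of_injective _ _).iso_comp_comp_iso _ _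
  · apply whiskerLeft_injective_of_mono (i ≫ e.inv)
    dsimp only
    rw [MonoidalPreadditive.whiskerLeft_zero]
    simpa only [Functor.Monoidal.map_whiskerLeft, E.map_zero, Preadditive.IsIso.comp_left_eq_zero,
      Preadditive.IsIso.comp_right_eq_zero] using congrArg E.map hQf
end
end

section
/- Let p be an odd prime, m ≥ 1, and let a, b be integers with p^m ≤ a, b < p^{m+1}. Write a = p·a' + a_0 and b = p·b' + b_0 with digits a_0, b_0 ∈ [0, p−1] (so p^{m−1} ≤ a', b' < p^m). Then: (i) if a_0 = b_0 = 0 then X_{ab} = X_{a'b'}; (ii) if a_0 = b_0 ≠ 0 then X_{ab} = 2·X_{a'b'}; (iii) if a_0 + b_0 = p then X_{ab} = Y_{a'b'} + Y_{b'a'}; (iv) otherwise (a_0 ≠ b_0 and a_0 + b_0 ≠ p) X_{ab} = 0. -/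
/-- For `p^m ≤ a < p^(m+1)` with base-`p` expansion `a = Σ_{i=0}^m a_i p^i` (so `a_m ≠ 0`),
the set of descendants of `a` is
`Desc(a) = { a_m p^m + Σ_{i=0}^{m-1} ε_i a_i p^i : ε_i ∈ {1, -1} } ⊆ ℤ`. -/
def Desc (p m a : ℕ) : Set ℤ :=
  {d | ∃ ε : ℕ → ℤ, (∀ i, ε i = 1 ∨ ε i = -1) ∧
    d = ((a / p ^ m : ℕ) : ℤ) * (p : ℤ) ^ m +
      ∑ i ∈ Finset.range m, ε i * (((a / p ^ i % p : ℕ) : ℤ) * (p : ℤ) ^ i)}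

/-- `X_{ab}` is the number of common descendants of `a` and `b`. -/
noncomputable def Xcard (p m a b : ℕ) : ℕ := (Desc p m a ∩ Desc p m b).ncard

/-- `Y_{ab}` is the number of descendants `d` of `a` such that `d - 1` is a descendant of `b`. -/
noncomputable def Ycard (p m a b : ℕ) : ℕ := {d ∈ Desc p m a | d - 1 ∈ Desc p m b}.ncard

/-!
The descendants of `a` are exactly the numbers `p * d ± a₀` with `d` a descendant of
`a' = a / p`. Two such numbers `p * d + u` and `p * e + v` coincide iff `u - v = p * (e - d)`,
and since `|u - v| < 2p` for the signed last digits `u = ±a₀`, `v = ±b₀`, this happens only when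
`u - v ∈ {-p, 0, p}`. Going through the four sign combinations gives the four cases; oddness of
`p` rules out `2 a₀ = p`, which keeps the `+a₀` and `-a₀` branches apart.
-/

open Set

def appendDigit (p : ℕ) (r d : ℤ) : ℤ := p * d + r

def appendSignedDigit (p : ℕ) (r : ℤ) (S : Set ℤ) : Set ℤ :=
  appendDigit p r '' S ∪ appendDigit p (-r) '' S

lemma Int.not_dvd_of_lt_two_mul {p w : ℤ} (hp : 0 < p) (hlo : -(2 * p) < w) (hhi : w < 2 * p)
    (hw : w ≠ -p ∧ w ≠ 0 ∧ w ≠ p) : ¬ p ∣ w := by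
  rintro ⟨k, rfl⟩
  have hk₁ : k < 2 := lt_of_mul_lt_mul_left (by linarith) hp.le
  have hk₂ : -2 < k := lt_of_mul_lt_mul_left (by linarith) hp.le
  interval_cases k <;> simp_all

section appendDigit

variable {p : ℕ}

lemma appendDigit_injective (hp : p ≠ 0) (r : ℤ) : Function.Injective (appendDigit p r) := by
  intro d e h
  simpa [appendDigit, hp] using h

lemma image_appendDigit_inter_of_sub_eq (hp : p ≠ 0) {r s k : ℤ} (h : r - s = p * k)
    (S T : Set ℤ) :
    appendDigit p r '' S ∩ appendDigit p s '' T = appendDigit p r '' {d ∈ S | d + k ∈ T} := by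
  ext x
  constructor
  · rintro ⟨⟨d, hd, rfl⟩, ⟨e, he, hed⟩⟩
    have hek : e = d + k := by
      apply mul_left_cancel₀ (Int.natCast_ne_zero.mpr hp)
      simp only [appendDigit] at hed
      linear_combination hed + h
    exact ⟨d, ⟨hd, hek ▸ he⟩, rfl⟩
  · rintro ⟨d, ⟨hd, he⟩, rfl⟩
    exact ⟨⟨d, hd, rfl⟩, ⟨d + k, he, by simp only [appendDigit]; linear_combination -h⟩⟩

lemma disjoint_image_appendDigit {r s : ℤ} (h : ¬ (p : ℤ) ∣ r - s) (S T : Set ℤ) :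
    Disjoint (appendDigit p r '' S) (appendDigit p s '' T) := by
  rw [Set.disjoint_left]
  rintro _ ⟨d, -, rfl⟩ ⟨e, -, hed⟩
  exact h ⟨e - d, by simp only [appendDigit] at hed; linear_combination -hed⟩

lemma ncard_image_appendDigit_union (hp : p ≠ 0) {r s : ℤ} (h : ¬ (p : ℤ) ∣ r - s)
    {S T : Set ℤ} (hS : S.Finite) (hT : T.Finite) :
    (appendDigit p r '' S ∪ appendDigit p s '' T).ncard = S.ncard + T.ncard := by
  rw [ncard_union_eq (disjoint_image_appendDigit h S T) (hS.image _) (hT.image _),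
    ncard_image_of_injective _ (appendDigit_injective hp r),
    ncard_image_of_injective _ (appendDigit_injective hp s)]

end appendDigit

section appendSignedDigit

variable {p : ℕ} {S T : Set ℤ}

lemma appendSignedDigit_inter (r s : ℤ) :
    appendSignedDigit p r S ∩ appendSignedDigit p s T =
      (appendDigit p r '' S ∩ appendDigit p s '' T ∪
        appendDigit p r '' S ∩ appendDigit p (-s) '' T) ∪
      (appendDigit p (-r) '' S ∩ appendDigit p s '' T ∪
        appendDigit p (-r) '' S ∩ appendDigit p (-s) '' T) := by
  rw [appendSignedDigit, appendSignedDigit, union_inter_distrib_right, inter_union_distrib_left,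
    inter_union_distrib_left]

lemma ncard_appendSignedDigit_zero_inter (hp : p ≠ 0) :
    (appendSignedDigit p 0 S ∩ appendSignedDigit p 0 T).ncard = (S ∩ T).ncard := by
  simp only [appendSignedDigit, neg_zero, union_self]
  rw [← image_inter (appendDigit_injective hp 0),
    ncard_image_of_injective _ (appendDigit_injective hp 0)]

lemma ncard_appendSignedDigit_inter_self (hp : Odd p) {r : ℕ} (hr₀ : r ≠ 0) (hrp : r < p)
    (hS : S.Finite) :
    (appendSignedDigit p r S ∩ appendSignedDigit p r T).ncard = 2 * (S ∩ T).ncard := by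
  obtain ⟨k, rfl⟩ := hp
  have h₁ : ¬ ((2 * k + 1 : ℕ) : ℤ) ∣ r - -r :=
    Int.not_dvd_of_lt_two_mul (by omega) (by omega) (by omega) (by omega)
  have h₂ : ¬ ((2 * k + 1 : ℕ) : ℤ) ∣ -r - r :=
    Int.not_dvd_of_lt_two_mul (by omega) (by omega) (by omega) (by omega)
  rw [appendSignedDigit_inter, ← image_inter (appendDigit_injective (by omega) _),
    ← image_inter (appendDigit_injective (by omega) _),
    (disjoint_image_appendDigit h₁ S T).inter_eq, (disjoint_image_appendDigit h₂ S T).inter_eq,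
    union_empty, empty_union, ncard_image_appendDigit_union (by omega) h₁ (hS.inter_of_left T)
      (hS.inter_of_left T), two_mul]

lemma ncard_sep_add_one_mem (S T : Set ℤ) :
    {d ∈ S | d + 1 ∈ T}.ncard = {e ∈ T | e - 1 ∈ S}.ncard := by
  rw [← ncard_image_of_injective _ (add_left_injective 1), image_add_right]
  congr 1
  ext e
  simp [sub_eq_add_neg, and_comm]

lemma ncard_appendSignedDigit_inter_of_add_eq (hp : Odd p) {r s : ℕ} (hrp : r < p)
    (hsp : s < p) (hrs : r + s = p) (hS : S.Finite) :
    (appendSignedDigit p r S ∩ appendSignedDigit p s T).ncard =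
      {d ∈ S | d - 1 ∈ T}.ncard + {e ∈ T | e - 1 ∈ S}.ncard := by
  obtain ⟨k, rfl⟩ := hp
  have hp : 2 * k + 1 ≠ 0 := by omega
  have h₁ : ¬ ((2 * k + 1 : ℕ) : ℤ) ∣ r - s :=
    Int.not_dvd_of_lt_two_mul (by omega) (by omega) (by omega) (by omega)
  have h₂ : ¬ ((2 * k + 1 : ℕ) : ℤ) ∣ -r - -s :=
    Int.not_dvd_of_lt_two_mul (by omega) (by omega) (by omega) (by omega)
  have h₃ : ¬ ((2 * k + 1 : ℕ) : ℤ) ∣ -r - r :=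
    Int.not_dvd_of_lt_two_mul (by omega) (by omega) (by omega) (by omega)
  rw [appendSignedDigit_inter, (disjoint_image_appendDigit h₁ S T).inter_eq,
    (disjoint_image_appendDigit h₂ S T).inter_eq, empty_union, union_empty,
    image_appendDigit_inter_of_sub_eq hp (k := 1) (by push_cast; omega),
    image_appendDigit_inter_of_sub_eq hp (k := -1) (by push_cast; omega), union_comm,
    ncard_image_appendDigit_union hp h₃ (hS.sep _) (hS.sep _), ncard_sep_add_one_mem]
  simp only [← sub_eq_add_neg]

lemma appendSignedDigit_inter_eq_empty {r s : ℕ} (hrp : r < p) (hsp : s < p) (hne : r ≠ s)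
    (hrs : r + s ≠ p) :
    appendSignedDigit p r S ∩ appendSignedDigit p s T = ∅ := by
  have h : ∀ u v : ℤ, u - v ≠ -p ∧ u - v ≠ 0 ∧ u - v ≠ p → -(2 * p) < u - v → u - v < 2 * p →
      appendDigit p u '' S ∩ appendDigit p v '' T = ∅ := fun u v huv hlo hhi =>
    (disjoint_image_appendDigit (Int.not_dvd_of_lt_two_mul (by omega) hlo hhi huv) S T).inter_eq
  rw [appendSignedDigit_inter, h _ _ (by omega) (by omega) (by omega),
    h _ _ (by omega) (by omega) (by omega), h _ _ (by omega) (by omega) (by omega),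
    h _ _ (by omega) (by omega) (by omega), union_self, union_self]

end appendSignedDigit

lemma desc_zero (p a : ℕ) : Desc p 0 a = {(a : ℤ)} := by
  ext x
  simp only [Desc, pow_zero, Nat.div_one, mul_one, Finset.range_zero, Finset.sum_empty, add_zero,
    mem_ofPred_eq, mem_singleton_iff]
  exact ⟨fun ⟨_, _, hx⟩ => hx, fun hx => ⟨fun _ => 1, fun _ => Or.inl rfl, hx⟩⟩

lemma desc_sum_succ (p n a : ℕ) (ε : ℕ → ℤ) :
    ((a / p ^ (n + 1) : ℕ) : ℤ) * (p : ℤ) ^ (n + 1) +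
      ∑ i ∈ Finset.range (n + 1), ε i * (((a / p ^ i % p : ℕ) : ℤ) * (p : ℤ) ^ i) =
    appendDigit p (ε 0 * (a % p : ℕ))
      (((a / p / p ^ n : ℕ) : ℤ) * (p : ℤ) ^ n +
        ∑ i ∈ Finset.range n, ε (i + 1) * (((a / p / p ^ i % p : ℕ) : ℤ) * (p : ℤ) ^ i)) := by
  simp only [Nat.div_div_eq_div_mul, ← pow_succ', Finset.sum_range_succ', appendDigit, mul_add,
    Finset.mul_sum, pow_zero, Nat.div_one, mul_one, pow_succ]
  ring_nf

lemma desc_succ (p n a : ℕ) :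
    Desc p (n + 1) a = appendSignedDigit p (a % p : ℕ) (Desc p n (a / p)) := by
  ext x
  constructor
  · rintro ⟨ε, hε, rfl⟩
    rw [desc_sum_succ]
    have hd : _ ∈ Desc p n (a / p) := ⟨fun i => ε (i + 1), fun i => hε (i + 1), rfl⟩
    rcases hε 0 with h | h <;> rw [h]
    · exact Or.inl ⟨_, hd, by simp⟩
    · exact Or.inr ⟨_, hd, by simp⟩
  · have hmem : ∀ s : ℤ, (s = 1 ∨ s = -1) → ∀ d ∈ Desc p n (a / p),
        appendDigit p (s * (a % p : ℕ)) d ∈ Desc p (n + 1) a := by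
      rintro s hs _ ⟨ε, hε, rfl⟩
      refine ⟨fun i => if i = 0 then s else ε (i - 1), by rintro (_ | i) <;> simp [hs, hε], ?_⟩
      rw [desc_sum_succ]
      simp
    rintro (⟨d, hd, rfl⟩ | ⟨d, hd, rfl⟩)
    · simpa using hmem 1 (Or.inl rfl) d hd
    · simpa using hmem (-1) (Or.inr rfl) d hd

lemma desc_finite (p m a : ℕ) : (Desc p m a).Finite := by
  induction m generalizing a with
  | zero => simp [desc_zero]
  | succ n ih => rw [desc_succ]; exact ((ih _).image _).union ((ih _).image _)

theorem Xcard_recursion_general {p : ℕ} (hodd : Odd p)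
    {m a b : ℕ} (hm : 1 ≤ m) :
    (a % p = 0 → b % p = 0 → Xcard p m a b = Xcard p (m - 1) (a / p) (b / p)) ∧
    (a % p = b % p → a % p ≠ 0 → Xcard p m a b = 2 * Xcard p (m - 1) (a / p) (b / p)) ∧
    (a % p + b % p = p →
      Xcard p m a b = Ycard p (m - 1) (a / p) (b / p) + Ycard p (m - 1) (b / p) (a / p)) ∧
    (a % p ≠ b % p → a % p + b % p ≠ p → Xcard p m a b = 0) := by
  obtain ⟨n, rfl⟩ : ∃ n, m = n + 1 := ⟨m - 1, by omega⟩
  have ha : a % p < p := Nat.mod_lt _ hodd.pos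
  have hb : b % p < p := Nat.mod_lt _ hodd.pos
  simp only [Xcard, Ycard, desc_succ, Nat.add_sub_cancel]
  refine ⟨fun ha₀ hb₀ => ?_, fun hab ha₀ => ?_, fun hab => ?_, fun hne hab => ?_⟩
  · rw [ha₀, hb₀, Nat.cast_zero]
    exact ncard_appendSignedDigit_zero_inter hodd.pos.ne'
  · rw [← hab]
    exact ncard_appendSignedDigit_inter_self hodd ha₀ ha (desc_finite _ _ _)
  · exact ncard_appendSignedDigit_inter_of_add_eq hodd ha hb hab (desc_finite _ _ _)
  · rw [appendSignedDigit_inter_eq_empty ha hb hne hab, ncard_empty]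

/-- Recursion for the number of common descendants, in terms of the last base-`p` digits
`a₀ = a % p`, `b₀ = b % p` and the truncations `a' = a / p`, `b' = b / p`. -/
theorem Xcard_recursion {p : ℕ} (hp : p.Prime) (hodd : Odd p)
    {m a b : ℕ} (hm : 1 ≤ m)
    (ha₁ : p ^ m ≤ a) (ha₂ : a < p ^ (m + 1))
    (hb₁ : p ^ m ≤ b) (hb₂ : b < p ^ (m + 1)) :
    (a % p = 0 → b % p = 0 → Xcard p m a b = Xcard p (m - 1) (a / p) (b / p)) ∧
    (a % p = b % p → a % p ≠ 0 → Xcard p m a b = 2 * Xcard p (m - 1) (a / p) (b / p)) ∧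
    (a % p + b % p = p →
      Xcard p m a b = Ycard p (m - 1) (a / p) (b / p) + Ycard p (m - 1) (b / p) (a / p)) ∧
    (a % p ≠ b % p → a % p + b % p ≠ p → Xcard p m a b = 0) :=
  Xcard_recursion_general hodd hm
end

section
/- Let p be a prime and n ≥ 1. The determinant of the square matrix of size p^{n−1}(p−1), with rows and columns indexed by the integers a, b in the interval [p^{n−1}, p^n − 1] and with (a,b)-entry |Desc(a) ∩ Desc(b)|, equals p^{p^{n−1} − 1}. -/
/-! Write `q = p^m` and `D_a` for the indicator of `Desc a`. Every descendant of `a ∈ [q, pq)`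
lies in `[1, a]`, so `X = L Lᵀ + H Hᵀ`, where `H` (resp. `L`) records the descendants in
`[q, pq)` (resp. `[1, q)`); `H` is unitriangular because `a` is its own largest descendant.
`Desc a` is symmetric about the multiple `a_m q` of `q`, and the `2q`-periodic odd function
`χ_β = [· ≡ -β] - [· ≡ β]` (mod `2q`) is odd about every multiple of `q`, so `χ_β` sums to
zero over `Desc a`. The descendants below `q` contribute `-D_a(β)`, hence `L = H K` with
`K x β = χ_β(x)`. The columns of `K` are orthogonal of squared length `p - 1`, so
`det X = det (1 + Kᵀ K) = p^(q-1)`. -/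

open Finset Matrix

lemma ncard_eq_sum_indicator_one {α R : Type*} [AddCommMonoidWithOne R] {S : Set α}
    {s : Finset α} (h : S ⊆ s) : (S.ncard : R) = ∑ x ∈ s, S.indicator 1 x := by
  classical
  have hS : S = ↑(s.filter (· ∈ S)) := by
    ext x
    simpa using fun hx => h hx
  rw [hS, Set.ncard_coe_finset, sum_indicator_subset _ (filter_subset _ _)]
  simp

lemma sum_eq_zero_of_involution_neg {ι M : Type*} [AddCommGroup M] [IsAddTorsionFree M]
    {s : Finset ι} {f : ι → M} (g : ι → ι) (hg : ∀ x ∈ s, g x ∈ s)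
    (hgg : ∀ x ∈ s, g (g x) = x) (hf : ∀ x ∈ s, f (g x) = -f x) : ∑ x ∈ s, f x = 0 :=
  sum_involution (fun x _ => g x) (fun x hx => by rw [hf x hx, add_neg_cancel])
    (fun x hx hfx hgx => hfx (self_eq_neg.mp (by simpa only [hgx] using hf x hx))) hg hgg

lemma sum_Ico_eq_sum_fin {M : Type*} [AddCommMonoid M] {a b : ℤ} {n : ℕ} (h : a + n = b)
    (f : ℤ → M) : ∑ x ∈ Ico a b, f x = ∑ i : Fin n, f (a + i) := by
  subst h
  rw [Fin.sum_univ_eq_sum_range (fun i => f (a + i))]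
  refine sum_nbij' (fun x => (x - a).toNat) (fun i => a + i) ?_ ?_ ?_ ?_ ?_ <;>
    intro x hx <;> simp only [mem_Ico, mem_range] at hx ⊢
  all_goals first | omega | (congr 1; omega)

lemma det_mul_mul_transpose_add_mul_transpose {ι κ R : Type*} [Fintype ι] [DecidableEq ι]
    [Fintype κ] [DecidableEq κ] [CommRing R] (H : Matrix ι ι R) (K : Matrix ι κ R) :
    det (H * K * (H * K)ᵀ + H * Hᵀ) = det H ^ 2 * det (1 + Kᵀ * K) := by
  have h : H * K * (H * K)ᵀ + H * Hᵀ = H * (1 + K * Kᵀ) * Hᵀ := by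
    rw [transpose_mul, Matrix.mul_add, Matrix.add_mul, Matrix.mul_one, Matrix.mul_assoc,
      Matrix.mul_assoc, Matrix.mul_assoc, add_comm]
  rw [h, det_mul, det_mul, det_transpose, det_one_add_mul_comm]
  ring

lemma sub_one_mul_add_self {p : ℕ} (hp : 0 < p) (q : ℕ) : (p - 1) * q + q = q * p := by
  rw [← Nat.succ_mul, Nat.succ_eq_add_one, Nat.sub_add_cancel hp, mul_comm]

lemma natCast_add_sub_one_mul {p : ℕ} (hp : 0 < p) (q : ℕ) :
    (q : ℤ) + ((p - 1) * q : ℕ) = q * p := by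
  exact_mod_cast (add_comm _ _).trans (sub_one_mul_add_self hp q)

lemma add_lt_mul_of_lt_sub_one_mul {p q i : ℕ} (hp : 0 < p) (hi : i < (p - 1) * q) :
    q + i < q * p := by
  have := sub_one_mul_add_self hp q
  omega

lemma sum_div_pow_mod_mul_pow (p a m : ℕ) :
    ∑ i ∈ range m, a / p ^ i % p * p ^ i = a % p ^ m := by
  induction m with
  | zero => simp [Nat.mod_one]
  | succ m ih =>
    rw [sum_range_succ, ih, pow_succ, Nat.mod_mul]
    ring

def chi (q β : ℕ) (x : ℤ) : ℤ :=
  (if (2 * q : ℤ) ∣ x + β then 1 else 0) - if (2 * q : ℤ) ∣ x - β then 1 else 0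

section chi

variable {q β : ℕ}

lemma chi_two_mul_sub (k x : ℤ) : chi q β (2 * (k * q) - x) = -chi q β x := by
  have h1 : (2 * q : ℤ) ∣ 2 * (k * q) - x + β ↔ (2 * q : ℤ) ∣ x - β := by
    rw [show 2 * (k * q) - x + β = 2 * q * k - (x - β) by ring,
      dvd_sub_right (dvd_mul_right _ _)]
  have h2 : (2 * q : ℤ) ∣ 2 * (k * q) - x - β ↔ (2 * q : ℤ) ∣ x + β := by
    rw [show 2 * (k * q) - x - β = 2 * q * k - (x + β) by ring,
      dvd_sub_right (dvd_mul_right _ _)]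
  simp only [chi, h1, h2]
  ring

lemma chi_of_nonneg_of_le (hβ : 0 < β) (hβq : β < q) {x : ℤ} (hx : 0 ≤ x) (hxq : x ≤ q) :
    chi q β x = -if x = β then 1 else 0 := by
  have h1 : ¬ (2 * q : ℤ) ∣ x + β := fun h => by
    have := Int.le_of_dvd (by omega) h
    omega
  have h2 : (2 * q : ℤ) ∣ x - β ↔ x = β := by
    refine ⟨fun h => ?_, fun h => by simp [h]⟩
    have := Int.eq_zero_of_abs_lt_dvd h (abs_lt.mpr ⟨by omega, by omega⟩)
    omega
  simp only [chi, h1, h2, if_false]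
  ring

lemma chi_mul_add (hβ : 0 < β) (hβq : β < q) (k : ℤ) {s : ℕ} (hs : s < q) :
    chi q β (k * q + s) =
      if Even k then -(if s = β then 1 else 0) else if s = q - β then 1 else 0 := by
  rcases Int.even_or_odd' k with ⟨j, rfl | rfl⟩
  · have h : 2 * j * q + s = 2 * (j * q) - (2 * (0 * q) - s) := by ring
    rw [if_pos (even_two_mul j), h, chi_two_mul_sub, chi_two_mul_sub, neg_neg,
      chi_of_nonneg_of_le hβ hβq (by omega) (by omega)]
    simp
  · have h : (2 * j + 1) * q + s = 2 * ((j + 1) * q) - (q - s : ℕ) := by push_cast [hs.le]; ring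
    rw [if_neg (Int.not_even_iff_odd.mpr (odd_two_mul_add_one j)), h, chi_two_mul_sub,
      chi_of_nonneg_of_le hβ hβq (by omega) (by omega)]
    simp only [neg_neg, Nat.cast_inj]
    congr 1
    apply propext
    omega

lemma sum_chi_mul_chi_block {β' : ℕ} (hβ : 0 < β) (hβq : β < q) (hβ' : 0 < β')
    (hβq' : β' < q) (k : ℤ) :
    ∑ s : Fin q, chi q β (k * q + s) * chi q β' (k * q + s) = if β = β' then 1 else 0 := by
  rw [Fin.sum_univ_eq_sum_range (fun s => chi q β (k * q + s) * chi q β' (k * q + s)),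
    sum_congr rfl fun s hs => by
    rw [chi_mul_add hβ hβq k (mem_range.mp hs), chi_mul_add hβ' hβq' k (mem_range.mp hs)]]
  have hbasis : ∀ b b' : ℕ, b < q →
      ∑ s ∈ range q, (if s = b then (1 : ℤ) else 0) * (if s = b' then 1 else 0) =
        if b = b' then 1 else 0 := fun b b' hb => by
    simp_rw [ite_mul, one_mul, zero_mul]
    rw [sum_ite_eq', if_pos (mem_range.mpr hb)]
  by_cases hk : Even k
  · simp only [hk, if_true, neg_mul_neg]
    exact hbasis β β' hβq
  · simp only [hk, if_false]
    rw [hbasis _ _ (by omega)]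
    congr 1
    apply propext
    omega

lemma sum_fin_chi_mul_chi {β' : ℕ} (hβ : 0 < β) (hβq : β < q) (hβ' : 0 < β')
    (hβq' : β' < q) (c : ℕ) :
    ∑ j : Fin (c * q), chi q β (q + j) * chi q β' (q + j) = c * if β = β' then 1 else 0 := by
  rw [← finProdFinEquiv.sum_comp, Fintype.sum_prod_type]
  have hval : ∀ (k : Fin c) (s : Fin q),
      (q : ℤ) + (finProdFinEquiv (k, s) : ℕ) = ((k : ℕ) + 1 : ℤ) * q + s := by
    intro k s
    simp only [finProdFinEquiv_apply_val]
    push_cast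
    ring
  simp only [hval, sum_chi_mul_chi_block hβ hβq hβ' hβq', sum_const, card_univ,
    Fintype.card_fin, nsmul_eq_mul]

end chi

section Desc

variable {p m a : ℕ} {d : ℤ}

lemma abs_sub_le_of_mem_desc (hd : d ∈ Desc p m a) :
    |d - (a / p ^ m : ℕ) * (p : ℤ) ^ m| ≤ (a % p ^ m : ℕ) := by
  obtain ⟨ε, hε, rfl⟩ := hd
  have habs : ∀ i, |ε i| = 1 := fun i => by rcases hε i with h | h <;> simp [h]
  calc _ ≤ ∑ i ∈ range m, |ε i * (((a / p ^ i % p : ℕ) : ℤ) * (p : ℤ) ^ i)| := by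
        rw [add_sub_cancel_left]; exact abs_sum_le_sum_abs _ _
    _ = ∑ i ∈ range m, ((a / p ^ i % p : ℕ) : ℤ) * (p : ℤ) ^ i :=
        sum_congr rfl fun i _ => by rw [abs_mul, habs, one_mul, abs_of_nonneg (by positivity)]
    _ = ((a % p ^ m : ℕ) : ℤ) := by
        rw [← sum_div_pow_mod_mul_pow p a m, Nat.cast_sum]
        simp only [Nat.cast_mul, Nat.cast_pow]

lemma le_of_mem_desc (hd : d ∈ Desc p m a) : d ≤ a := by
  have h := (abs_le.mp (abs_sub_le_of_mem_desc hd)).2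
  have := Nat.div_add_mod' a (p ^ m)
  zify at this
  push_cast at h
  linarith

lemma one_le_of_mem_desc (hp : 0 < p) (ha : p ^ m ≤ a) (hd : d ∈ Desc p m a) : 1 ≤ d := by
  have h := (abs_le.mp (abs_sub_le_of_mem_desc hd)).1
  have hq : 0 < p ^ m := pow_pos hp m
  have h1 : 1 ≤ a / p ^ m := (Nat.one_le_div_iff hq).mpr ha
  have h2 : a % p ^ m < p ^ m := Nat.mod_lt _ hq
  have h3 : p ^ m ≤ a / p ^ m * p ^ m := Nat.le_mul_of_pos_left _ h1
  zify at h2 h3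
  push_cast at h
  linarith

lemma natCast_mem_desc (p m a : ℕ) : (a : ℤ) ∈ Desc p m a := by
  refine ⟨fun _ => 1, fun _ => Or.inl rfl, ?_⟩
  have := Nat.div_add_mod' a (p ^ m)
  rw [← sum_div_pow_mod_mul_pow p a m] at this
  simp only [one_mul]
  exact_mod_cast this.symm

lemma two_mul_sub_mem_desc (hd : d ∈ Desc p m a) :
    2 * ((a / p ^ m : ℕ) * ((p ^ m : ℕ) : ℤ)) - d ∈ Desc p m a := by
  obtain ⟨ε, hε, rfl⟩ := hd
  refine ⟨fun i => -ε i, fun i => by rcases hε i with h | h <;> simp [h], ?_⟩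
  simp only [neg_mul, sum_neg_distrib]
  push_cast
  ring

lemma Xcard_eq_sum_Ico (hp : 0 < p) (ha : p ^ m ≤ a) (ha' : a < p ^ m * p) (b : ℕ) :
    (Xcard p m a b : ℤ) = ∑ x ∈ Ico 1 ((p ^ m : ℕ) * p : ℤ),
      (Desc p m a).indicator 1 x * (Desc p m b).indicator 1 x := by
  rw [Xcard, ncard_eq_sum_indicator_one (s := Ico 1 ((p ^ m : ℕ) * p : ℤ))]
  · exact sum_congr rfl fun x _ => by rw [Set.inter_indicator_one, Pi.mul_apply]
  · intro x hx
    have : x ≤ a := le_of_mem_desc hx.1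
    simp only [coe_Ico, Set.mem_Ico]
    exact ⟨one_le_of_mem_desc hp ha hx.1, by omega⟩


lemma sum_Ico_indicator_desc_mul_chi (hp : 0 < p) (ha : p ^ m ≤ a) (ha' : a < p ^ m * p)
    {β : ℕ} (hβ : 0 < β) (hβq : β < p ^ m) :
    ∑ x ∈ Ico ((p ^ m : ℕ) : ℤ) ((p ^ m : ℕ) * p),
      (Desc p m a).indicator 1 x * chi (p ^ m) β x = (Desc p m a).indicator 1 (β : ℤ) := by
  classical
  set q := p ^ m
  have hsum : ∑ x ∈ Ico (1 : ℤ) (q * p), (Desc p m a).indicator 1 x * chi q β x = 0 := by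
    simp only [Set.indicator_apply, Pi.one_apply, ite_mul, one_mul, zero_mul, ← sum_filter]
    refine sum_eq_zero_of_involution_neg (fun x => 2 * ((a / q : ℕ) * (q : ℤ)) - x)
      (fun x hx => ?_) (fun x _ => by ring) (fun x _ => chi_two_mul_sub _ x)
    rw [mem_filter, mem_Ico] at hx ⊢
    have hmem := two_mul_sub_mem_desc hx.2
    have ha'' : (a : ℤ) < q * p := by exact_mod_cast ha'
    exact ⟨⟨one_le_of_mem_desc hp ha hmem, (le_of_mem_desc hmem).trans_lt ha''⟩, hmem⟩
  have hlow : ∑ x ∈ Ico (1 : ℤ) q, (Desc p m a).indicator 1 x * chi q β x =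
      -(Desc p m a).indicator 1 (β : ℤ) := by
    have hterm : ∀ x ∈ Ico (1 : ℤ) q, (Desc p m a).indicator 1 x * chi q β x =
        -if x = β then (Desc p m a).indicator 1 x else 0 := fun x hx => by
      rw [mem_Ico] at hx
      rw [chi_of_nonneg_of_le hβ hβq (by omega) hx.2.le, mul_neg, mul_ite, mul_one, mul_zero]
    rw [sum_congr rfl hterm, sum_neg_distrib, sum_ite_eq',
      if_pos (mem_Ico.mpr ⟨by omega, by omega⟩)]
  have hq : (1 : ℤ) ≤ q := by exact_mod_cast Nat.one_le_pow m p hp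
  rw [← Ico_union_Ico_eq_Ico hq (by nlinarith), sum_union (Ico_disjoint_Ico_consecutive _ _ _),
    hlow] at hsum
  linarith

end Desc

section Matrices

variable (p m : ℕ)

noncomputable def descHighMatrix : Matrix (Fin ((p - 1) * p ^ m)) (Fin ((p - 1) * p ^ m)) ℤ :=
  of fun i j => (Desc p m (p ^ m + i)).indicator 1 (((p ^ m : ℕ) : ℤ) + (j : ℕ))

noncomputable def descLowMatrix : Matrix (Fin ((p - 1) * p ^ m)) (Fin (p ^ m - 1)) ℤ :=
  of fun i b => (Desc p m (p ^ m + i)).indicator 1 (1 + (b : ℕ) : ℤ)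

noncomputable def chiMatrix : Matrix (Fin ((p - 1) * p ^ m)) (Fin (p ^ m - 1)) ℤ :=
  of fun j b => chi (p ^ m) (1 + b) (((p ^ m : ℕ) : ℤ) + (j : ℕ))

variable {p m}

lemma Xcard_matrix_eq (hp : 0 < p) :
    (of fun i j : Fin ((p - 1) * p ^ m) =>
        (Xcard p m (p ^ m + (i : ℕ)) (p ^ m + (j : ℕ)) : ℤ)) =
      descLowMatrix p m * (descLowMatrix p m)ᵀ +
        descHighMatrix p m * (descHighMatrix p m)ᵀ := by
  ext i j
  have hq : 1 ≤ p ^ m := Nat.one_le_pow m p hp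
  have hlow : (1 : ℤ) + (p ^ m - 1 : ℕ) = (p ^ m : ℕ) := by omega
  have hhigh : ((p ^ m : ℕ) : ℤ) ≤ (p ^ m : ℕ) * p := le_mul_of_one_le_right (by positivity)
    (by exact_mod_cast hp)
  rw [of_apply,
    Xcard_eq_sum_Ico hp (Nat.le_add_right _ _) (add_lt_mul_of_lt_sub_one_mul hp i.isLt),
    ← Ico_union_Ico_eq_Ico (b := ((p ^ m : ℕ) : ℤ)) (by omega) hhigh,
    sum_union (Ico_disjoint_Ico_consecutive _ _ _), sum_Ico_eq_sum_fin hlow,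
    sum_Ico_eq_sum_fin (natCast_add_sub_one_mul hp _)]
  simp only [Matrix.add_apply, mul_apply, transpose_apply, descLowMatrix, descHighMatrix, of_apply]

lemma descHighMatrix_mul_chiMatrix (hp : 0 < p) :
    descHighMatrix p m * chiMatrix p m = descLowMatrix p m := by
  ext i b
  simp only [mul_apply, descHighMatrix, chiMatrix, descLowMatrix, of_apply]
  rw [← sum_Ico_eq_sum_fin (natCast_add_sub_one_mul hp _)
      (fun x => (Desc p m (p ^ m + i)).indicator 1 x * chi (p ^ m) (1 + b) x),
    sum_Ico_indicator_desc_mul_chi hp (Nat.le_add_right _ _)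
      (add_lt_mul_of_lt_sub_one_mul hp i.isLt) (by omega) (by omega)]
  push_cast
  rfl

lemma chiMatrix_transpose_mul_self :
    (chiMatrix p m)ᵀ * chiMatrix p m = ((p - 1 : ℕ) : ℤ) • 1 := by
  ext b b'
  simp only [mul_apply, transpose_apply, chiMatrix, of_apply, Matrix.smul_apply, one_apply,
    smul_eq_mul]
  rw [sum_fin_chi_mul_chi (by omega) (by omega) (by omega) (by omega) (p - 1)]
  simp [Fin.val_inj]

lemma det_descHighMatrix : det (descHighMatrix p m) = 1 := by
  rw [det_of_isLowerTriangular _ fun i j hij => ?_]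
  · refine prod_eq_one fun i _ => ?_
    simp only [descHighMatrix, of_apply]
    exact Set.indicator_of_mem (by exact_mod_cast natCast_mem_desc p m (p ^ m + i)) 1
  · simp only [descHighMatrix, of_apply]
    refine Set.indicator_of_notMem (fun h => ?_) 1
    have := le_of_mem_desc h
    have hij : (i : ℕ) < j := hij
    omega

end Matrices

/-- The determinant of the square matrix of size `p^{n-1}(p-1) = p^n - p^{n-1}`, with rows and
columns indexed by the integers in `[p^{n-1}, p^n - 1]` and entries the numbers of common
descendants, equals `p^(p^{n-1} - 1)`. -/
theorem det_Xcard_matrix {p : ℕ} (hp : p.Prime) {n : ℕ} (hn : 1 ≤ n) :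
    (Matrix.of fun i j : Fin (p ^ n - p ^ (n - 1)) =>
        ((Xcard p (n - 1) (p ^ (n - 1) + (i : ℕ)) (p ^ (n - 1) + (j : ℕ))) : ℤ)).det =
      (p : ℤ) ^ (p ^ (n - 1) - 1) := by
  obtain ⟨m, rfl⟩ : ∃ m, n = m + 1 := ⟨n - 1, by omega⟩
  have hdim : p ^ (m + 1) - p ^ m = (p - 1) * p ^ m := by
    have := sub_one_mul_add_self hp.pos (p ^ m)
    rw [pow_succ]
    omega
  have hdiag : (1 : Matrix (Fin (p ^ m - 1)) (Fin (p ^ m - 1)) ℤ) + ((p - 1 : ℕ) : ℤ) • 1 =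
      (p : ℤ) • 1 := by
    rw [Nat.cast_sub hp.one_le, Nat.cast_one, sub_smul, one_smul, add_sub_cancel]
  rw [Nat.add_sub_cancel, hdim, Xcard_matrix_eq hp.pos, ← descHighMatrix_mul_chiMatrix hp.pos,
    det_mul_mul_transpose_add_mul_transpose, det_descHighMatrix, chiMatrix_transpose_mul_self,
    hdiag, det_smul, det_one, Fintype.card_fin, one_pow, one_mul, mul_one]
end

section
/- Let p be a prime, n ≥ 1, and let q ∈ ℂ be a primitive 2p^n-th root of unity. Then the quantum integer [p^{n−1}]_q := (q^{p^{n−1}} − q^{−p^{n−1}})/(q − q^{−1}) lies in the ring ℤ[q] and divides p in ℤ[q], i.e., there exists r ∈ ℤ[q] with p = r · [p^{n−1}]_q. -/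
/-!
Put `m = p ^ (n - 1)`. Multiplying `[m]_q = q^{1-m} (1 + q^2 + ⋯ + q^{2(m-1)})` by the element
`q^{m-1} (q^2 - 1)` of `ℤ[q]` gives `q^{2m} - 1`, and `ω = q^{2m}` is a primitive `p`-th root of
unity, so `ω - 1` divides `p`, already in `ℤ[ω] ⊆ ℤ[q]`.
-/

open Finset

section QuantumInt

variable {K : Type*} [Field K] {q : K}

def quantumInt (q : K) (m : ℕ) : K := (q ^ m - q⁻¹ ^ m) / (q - q⁻¹)

lemma quantumInt_eq_inv_pow_mul_geom_sum (hq : q ≠ 0) (hq2 : q ^ 2 ≠ 1) (m : ℕ) :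
    quantumInt q m = q⁻¹ ^ (m - 1) * ∑ j ∈ range m, (q ^ 2) ^ j := by
  have hsub : q - q⁻¹ = q⁻¹ * (q ^ 2 - 1) := by field_simp
  have hden : q - q⁻¹ ≠ 0 := by
    rw [hsub]; exact mul_ne_zero (inv_ne_zero hq) (sub_ne_zero.mpr hq2)
  rw [quantumInt, div_eq_iff hden, hsub, eq_comm]
  rcases m.eq_zero_or_pos with rfl | hm
  · simp
  calc (q⁻¹ ^ (m - 1) * ∑ j ∈ range m, (q ^ 2) ^ j) * (q⁻¹ * (q ^ 2 - 1))
      = q⁻¹ ^ (m - 1 + 1) * ((∑ j ∈ range m, (q ^ 2) ^ j) * (q ^ 2 - 1)) := by ring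
    _ = q⁻¹ ^ m * ((q ^ 2) ^ m - 1) := by rw [geom_sum_mul, Nat.sub_add_cancel hm]
    _ = q ^ m - q⁻¹ ^ m := by rw [mul_sub, ← mul_pow, sq, inv_mul_cancel_left₀ hq, mul_one]

lemma quantumInt_mem {S : Subring K} (hq : q ∈ S) (hq' : q⁻¹ ∈ S) (m : ℕ) :
    quantumInt q m ∈ S := by
  by_cases hden : q - q⁻¹ = 0
  · simp [quantumInt, hden, S.zero_mem]
  have hq0 : q ≠ 0 := by rintro rfl; simp at hden
  have hq2 : q ^ 2 ≠ 1 := fun h ↦ hden <| by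
    rw [sub_eq_zero, eq_comm, inv_eq_of_mul_eq_one_right (by rw [← sq, h])]
  rw [quantumInt_eq_inv_pow_mul_geom_sum hq0 hq2]
  exact S.mul_mem (S.pow_mem hq' _) (S.sum_mem fun j _ ↦ S.pow_mem (S.pow_mem hq 2) j)

lemma quantumInt_mul_pow_mul_sq_sub_one (hq : q ≠ 0) (m : ℕ) :
    quantumInt q m * (q ^ (m - 1) * (q ^ 2 - 1)) = q ^ (2 * m) - 1 := by
  by_cases hq2 : q ^ 2 = 1
  · simp [hq2, pow_mul]
  rw [quantumInt_eq_inv_pow_mul_geom_sum hq hq2, pow_mul]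
  calc (q⁻¹ ^ (m - 1) * ∑ j ∈ range m, (q ^ 2) ^ j) * (q ^ (m - 1) * (q ^ 2 - 1))
      = (q⁻¹ * q) ^ (m - 1) * ((∑ j ∈ range m, (q ^ 2) ^ j) * (q ^ 2 - 1)) := by ring
    _ = (q ^ 2) ^ m - 1 := by rw [inv_mul_cancel₀ hq, one_pow, one_mul, geom_sum_mul]

end QuantumInt

lemma inv_mem_closure_singleton_of_pow_eq_one {K : Type*} [Field K] {q : K} {N : ℕ}
    (hN : 0 < N) (hq : q ^ N = 1) : q⁻¹ ∈ Subring.closure ({q} : Set K) := by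
  have hinv : q⁻¹ = q ^ (N - 1) := by
    refine inv_eq_of_mul_eq_one_right ?_
    rw [← pow_succ', Nat.sub_add_cancel hN, hq]
  rw [hinv]
  exact Subring.pow_mem _ (Subring.subset_closure (Set.mem_singleton q)) _

/-- Let `p` be a prime, `n ≥ 1`, and `q ∈ ℂ` a primitive `2p^n`-th root of unity. Then the
quantum integer `[p^{n-1}]_q = (q^{p^{n-1}} - q^{-p^{n-1}})/(q - q⁻¹)` lies in `ℤ[q]` and
divides `p` in `ℤ[q]`. -/
theorem quantum_integer_dvd_p {p : ℕ} (hp : p.Prime) {n : ℕ} (hn : 1 ≤ n) {q : ℂ}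
    (hq : IsPrimitiveRoot q (2 * p ^ n)) :
    (q ^ p ^ (n - 1) - q⁻¹ ^ p ^ (n - 1)) / (q - q⁻¹) ∈ Subring.closure ({q} : Set ℂ) ∧
    ∃ r ∈ Subring.closure ({q} : Set ℂ),
      (p : ℂ) = r * ((q ^ p ^ (n - 1) - q⁻¹ ^ p ^ (n - 1)) / (q - q⁻¹)) := by
  set R := Subring.closure ({q} : Set ℂ)
  set m := p ^ (n - 1)
  have hN : 0 < 2 * p ^ n := by have := hp.pos; positivity
  have hqR : q ∈ R := Subring.subset_closure (Set.mem_singleton q)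
  have hmem : quantumInt q m ∈ R :=
    quantumInt_mem hqR (inv_mem_closure_singleton_of_pow_eq_one hN hq.pow_eq_one) m
  let qR : R := ⟨q, hqR⟩
  have hω : IsPrimitiveRoot (qR ^ (2 * m)) p := by
    refine .of_map_of_injective (f := R.subtype) (hq.pow hN ?_) Subtype.val_injective
    rw [mul_assoc, ← pow_succ, Nat.sub_add_cancel hn]
  have hdvd : (⟨quantumInt q m, hmem⟩ : R) ∣ qR ^ (2 * m) - 1 :=
    ⟨qR ^ (m - 1) * (qR ^ 2 - 1), Subtype.ext
      (quantumInt_mul_pow_mul_sq_sub_one (hq.ne_zero hN.ne') m).symm⟩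
  obtain ⟨r, hr⟩ := hdvd.trans (hω.sub_one_dvd_natCast hp.one_lt)
  refine ⟨hmem, r, r.2, ?_⟩
  have hval := congrArg Subtype.val hr
  rw [SubringClass.coe_natCast, Subring.coe_mul, mul_comm] at hval
  exact hval
end
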